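/- arXiv:1908.04801 — 4 statements merged into one kernel-verified Lean document; each statement's English description precedes it below -/
import Mathlib

section
/- Let ∇ be an affine connection on TM compatible with a pNC structure (∇τ = 0 and ∇h = 0), with torsion tensor T. Then for every longitudinal frame τ_A with dual co-frame τ^A and all transverse vector fields V, W ∈ Γ(Ker(τ)): (i) τ^A(T(V,W)) = dτ^A(V,W), and (ii) η_{A(B} τ^A(T(τ_{C)},V)) = η_{A(B} dτ^A(τ_{C)},V). -/
noncomputable section

def eta' (p : ℕ) (A B : Fin (p+1)) : ℝ :=
  if A = B then (if A = 0 then -1 else 1) else 0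

/-- Spacetime, in a local coordinate chart. -/
abbrev Spc (d : ℕ) := Fin d → ℝ

/-- Partial derivative `∂_μ f` at `x`. -/
def pd {d : ℕ} (f : Spc d → ℝ) (μ : Fin d) (x : Spc d) : ℝ :=
  fderiv ℝ f x (Pi.single μ 1)

/-- Smoothness of a scalar component. -/
def Sm {d : ℕ} (f : Spc d → ℝ) : Prop := ContDiff ℝ (⊤ : ℕ∞) f

/-- `∇τ = 0` for a covariant 2-tensor `τ`, for the connection with Christoffel symbols
`Γ^λ_{μν} = Γ x λ μ ν` (convention `∇_{∂ν}∂μ = Γ^λ_{μν}∂λ`). -/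
def CompatLower (d : ℕ) (Γ : Spc d → Fin d → Fin d → Fin d → ℝ)
    (τ : Spc d → Fin d → Fin d → ℝ) : Prop :=
  ∀ x a b c₀, pd (fun y => τ y a b) c₀ x
    - (∑ e, Γ x e a c₀ * τ x e b) - (∑ e, Γ x e b c₀ * τ x a e) = 0

/-- `∇h = 0` for a contravariant 2-tensor `h`. -/
def CompatUpper (d : ℕ) (Γ : Spc d → Fin d → Fin d → Fin d → ℝ)
    (h : Spc d → Fin d → Fin d → ℝ) : Prop :=
  ∀ x a b c₀, pd (fun y => h y a b) c₀ x
    + (∑ e, Γ x a e c₀ * h x e b) + (∑ e, Γ x b e c₀ * h x a e) = 0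

/-- Components of `T(X,Y) = ∇_X Y − ∇_Y X − [X,Y]`. -/
def torVec {d : ℕ} (Γ : Spc d → Fin d → Fin d → Fin d → ℝ)
    (X Y : Spc d → Fin d → ℝ) (l : Fin d) (x : Spc d) : ℝ :=
  ∑ μ, ∑ ν, Γ x l μ ν * (Y x μ * X x ν - X x μ * Y x ν)

/-- Components of the 2-form `dτ^A` for the co-frame `c`. -/
def dcForm {d p : ℕ} (c : Spc d → Fin (p+1) → Fin d → ℝ) (A : Fin (p+1))
    (μ ν : Fin d) (x : Spc d) : ℝ :=
  pd (fun y => c y A ν) μ x - pd (fun y => c y A μ) ν x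

lemma pd_sum {d : ℕ} {ι : Type*} (s : Finset ι) (f : ι → Spc d → ℝ) {x : Spc d}
    (hf : ∀ i ∈ s, DifferentiableAt ℝ (f i) x) (μ : Fin d) :
    pd (fun y => ∑ i ∈ s, f i y) μ x = ∑ i ∈ s, pd (f i) μ x := by
  unfold pd
  rw [fderiv_fun_sum hf]
  simp

lemma pd_const_mul_mul {d : ℕ} {f g : Spc d → ℝ} {x : Spc d}
    (hf : DifferentiableAt ℝ f x) (hg : DifferentiableAt ℝ g x) (e : ℝ) (μ : Fin d) :
    pd (fun y => e * f y * g y) μ x = e * (pd f μ x * g x + f x * pd g μ x) := by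
  unfold pd
  have h1 : (fun y => e * f y * g y) = fun y => (fun z => e * f z) y * g y := rfl
  rw [h1, fderiv_fun_mul (hf.const_mul e) hg, fderiv_const_mul hf e]
  simp
  ring

lemma eta'_symm (p : ℕ) (A B : Fin (p+1)) : eta' p A B = eta' p B A := by
  unfold eta'
  by_cases h : A = B
  · subst h; rfl
  · simp [h, Ne.symm h]

lemma eta'_ne (p : ℕ) (A : Fin (p+1)) : eta' p A A ≠ 0 := by
  by_cases h : A = 0 <;> simp [eta', h]

lemma eta'_off {p : ℕ} {A B : Fin (p+1)} (h : A ≠ B) : eta' p A B = 0 := by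
  simp [eta', h]

def Mm {d p : ℕ} (Γ : Spc d → Fin d → Fin d → Fin d → ℝ)
    (c : Spc d → Fin (p+1) → Fin d → ℝ) (A : Fin (p+1)) (a μ : Fin d) (x : Spc d) : ℝ :=
  pd (fun y => c y A a) μ x - ∑ e, Γ x e a μ * c x A e

lemma contract4 {d q : ℕ} (K : Fin q → Fin q → ℝ) (F G : Fin q → Fin d → ℝ) (u v : Fin d → ℝ) :
    ∑ a, ∑ b, u a * v b * (∑ A, ∑ B, K A B * (F A a * G B b))
      = ∑ A, ∑ B, K A B * ((∑ a, F A a * u a) * (∑ b, G B b * v b)) := by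
  calc ∑ a, ∑ b, u a * v b * (∑ A, ∑ B, K A B * (F A a * G B b))
      = ∑ a, ∑ b, ∑ A, ∑ B, u a * v b * (K A B * (F A a * G B b)) := by
        refine Finset.sum_congr rfl fun a _ => Finset.sum_congr rfl fun b _ => ?_
        rw [Finset.mul_sum]
        exact Finset.sum_congr rfl fun A _ => by rw [Finset.mul_sum]
    _ = ∑ a, ∑ A, ∑ b, ∑ B, u a * v b * (K A B * (F A a * G B b)) :=
        Finset.sum_congr rfl fun a _ => Finset.sum_comm
    _ = ∑ A, ∑ a, ∑ b, ∑ B, u a * v b * (K A B * (F A a * G B b)) := Finset.sum_comm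
    _ = ∑ A, ∑ a, ∑ B, ∑ b, u a * v b * (K A B * (F A a * G B b)) :=
        Finset.sum_congr rfl fun A _ => Finset.sum_congr rfl fun a _ => Finset.sum_comm
    _ = ∑ A, ∑ B, ∑ a, ∑ b, u a * v b * (K A B * (F A a * G B b)) :=
        Finset.sum_congr rfl fun A _ => Finset.sum_comm
    _ = ∑ A, ∑ B, K A B * ((∑ a, F A a * u a) * (∑ b, G B b * v b)) := by
        refine Finset.sum_congr rfl fun A _ => Finset.sum_congr rfl fun B _ => ?_
        rw [Finset.sum_mul_sum, Finset.mul_sum]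
        refine Finset.sum_congr rfl fun a _ => ?_
        rw [Finset.mul_sum]
        exact Finset.sum_congr rfl fun b _ => by ring

lemma collapse {p : ℕ} (C : Fin (p+1)) (q : Fin (p+1) → ℝ) :
    ∑ A, ∑ B, eta' p A B * ((if C = A then (1:ℝ) else 0) * q B) = eta' p C C * q C := by
  rw [Finset.sum_eq_single_of_mem C (Finset.mem_univ C)
    (fun A _ hA => Finset.sum_eq_zero fun B _ => by rw [if_neg (Ne.symm hA)]; ring)]
  rw [Finset.sum_eq_single_of_mem C (Finset.mem_univ C)
    (fun B _ hB => by rw [eta'_off (Ne.symm hB), zero_mul])]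
  simp

/-- Proposition 4: for a connection compatible with a pNC structure, with torsion `T`,
and any longitudinal frame `τ_A` with dual co-frame `τ^A`, and transverse fields `V,W`:
(i) `τ^A(T(V,W)) = dτ^A(V,W)` and
(ii) `η_{A(B} τ^A(T(τ_{C)},V)) = η_{A(B} dτ^A(τ_{C)},V)`. -/
theorem torsion_constraints (d p : ℕ)
    (τ : Spc d → Fin d → Fin d → ℝ)
    (h : Spc d → Fin d → Fin d → ℝ)
    (hτsm : ∀ a b, Sm (fun x => τ x a b)) (hhsm : ∀ a b, Sm (fun x => h x a b))
    (hhτ : ∀ x a b, ∑ e, h x a e * τ x e b = 0)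
    (Γ : Spc d → Fin d → Fin d → Fin d → ℝ)
    (hcompτ : CompatLower d Γ τ) (hcomph : CompatUpper d Γ h)
    (t : Spc d → Fin (p+1) → Fin d → ℝ) (htsm : ∀ A a, Sm (fun x => t x A a))
    (c : Spc d → Fin (p+1) → Fin d → ℝ) (hcsm : ∀ A a, Sm (fun x => c x A a))
    (hdual : ∀ x A B, ∑ a, c x B a * t x A a = if A = B then (1:ℝ) else 0)
    (hτcc : ∀ x a b, τ x a b = ∑ A, ∑ B, eta' p A B * c x A a * c x B b)
    (V W : Spc d → Fin d → ℝ)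
    (hVsm : ∀ a, Sm (fun x => V x a)) (hWsm : ∀ a, Sm (fun x => W x a))
    (hVtr : ∀ x a, ∑ b, τ x a b * V x b = 0)
    (hWtr : ∀ x a, ∑ b, τ x a b * W x b = 0) :
    (∀ x A, (∑ l, c x A l * torVec Γ V W l x)
      = ∑ μ, ∑ ν, V x μ * W x ν * dcForm c A μ ν x) ∧
    (∀ x B C,
      (∑ A, (eta' p A B * (∑ l, c x A l * torVec Γ (fun y m => t y C m) V l x)
           + eta' p A C * (∑ l, c x A l * torVec Γ (fun y m => t y B m) V l x)))
      = ∑ A, (eta' p A B * (∑ μ, ∑ ν, t x C μ * V x ν * dcForm c A μ ν x)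
           + eta' p A C * (∑ μ, ∑ ν, t x B μ * V x ν * dcForm c A μ ν x))) := by
  have hdc : ∀ (A : Fin (p+1)) (a : Fin d) (x : Spc d),
      DifferentiableAt ℝ (fun y => c y A a) x :=
    fun A a x => ((hcsm A a).differentiable (by simp)).differentiableAt
  have hτcc' : ∀ x a b, τ x a b = ∑ A, ∑ B, eta' p A B * (c x A a * c x B b) := by
    intro x a b
    rw [hτcc x a b]
    exact Finset.sum_congr rfl fun A _ => Finset.sum_congr rfl fun B _ => by ring
  have pdτ : ∀ x a b μ, pd (fun y => τ y a b) μ x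
      = ∑ A, ∑ B, eta' p A B * (pd (fun y => c y A a) μ x * c x B b
          + c x A a * pd (fun y => c y B b) μ x) := by
    intro x a b μ
    have hfa : (fun y => τ y a b) = fun y => ∑ A, ∑ B, eta' p A B * c y A a * c y B b :=
      funext fun y => hτcc y a b
    rw [hfa, pd_sum Finset.univ (fun A y => ∑ B, eta' p A B * c y A a * c y B b)
      (fun A _ => DifferentiableAt.fun_sum fun B _ =>
        ((hdc A a x).const_mul _).mul (hdc B b x)) μ]
    refine Finset.sum_congr rfl fun A _ => ?_
    rw [pd_sum Finset.univ (fun B y => eta' p A B * c y A a * c y B b)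
      (fun B _ => ((hdc A a x).const_mul _).mul (hdc B b x)) μ]
    exact Finset.sum_congr rfl fun B _ => pd_const_mul_mul (hdc A a x) (hdc B b x) _ μ
  have hGt1 : ∀ x a b μ, ∑ e, Γ x e a μ * τ x e b
      = ∑ A, ∑ B, eta' p A B * ((∑ e, Γ x e a μ * c x A e) * c x B b) := by
    intro x a b μ
    calc ∑ e, Γ x e a μ * τ x e b
        = ∑ e, ∑ A, ∑ B, Γ x e a μ * (eta' p A B * (c x A e * c x B b)) := by
          refine Finset.sum_congr rfl fun e _ => ?_
          rw [hτcc' x e b, Finset.mul_sum]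
          exact Finset.sum_congr rfl fun A _ => by rw [Finset.mul_sum]
      _ = ∑ A, ∑ e, ∑ B, Γ x e a μ * (eta' p A B * (c x A e * c x B b)) := Finset.sum_comm
      _ = ∑ A, ∑ B, ∑ e, Γ x e a μ * (eta' p A B * (c x A e * c x B b)) :=
          Finset.sum_congr rfl fun A _ => Finset.sum_comm
      _ = ∑ A, ∑ B, eta' p A B * ((∑ e, Γ x e a μ * c x A e) * c x B b) := by
          refine Finset.sum_congr rfl fun A _ => Finset.sum_congr rfl fun B _ => ?_
          rw [Finset.sum_mul, Finset.mul_sum]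
          exact Finset.sum_congr rfl fun e _ => by ring
  have hGt2 : ∀ x a b μ, ∑ e, Γ x e b μ * τ x a e
      = ∑ A, ∑ B, eta' p A B * (c x A a * (∑ e, Γ x e b μ * c x B e)) := by
    intro x a b μ
    calc ∑ e, Γ x e b μ * τ x a e
        = ∑ e, ∑ A, ∑ B, Γ x e b μ * (eta' p A B * (c x A a * c x B e)) := by
          refine Finset.sum_congr rfl fun e _ => ?_
          rw [hτcc' x a e, Finset.mul_sum]
          exact Finset.sum_congr rfl fun A _ => by rw [Finset.mul_sum]
      _ = ∑ A, ∑ e, ∑ B, Γ x e b μ * (eta' p A B * (c x A a * c x B e)) := Finset.sum_comm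
      _ = ∑ A, ∑ B, ∑ e, Γ x e b μ * (eta' p A B * (c x A a * c x B e)) :=
          Finset.sum_congr rfl fun A _ => Finset.sum_comm
      _ = ∑ A, ∑ B, eta' p A B * (c x A a * (∑ e, Γ x e b μ * c x B e)) := by
          refine Finset.sum_congr rfl fun A _ => Finset.sum_congr rfl fun B _ => ?_
          rw [Finset.mul_sum, Finset.mul_sum]
          exact Finset.sum_congr rfl fun e _ => by ring
  have nabla : ∀ x a b μ,
      (∑ A, ∑ B, eta' p A B * (Mm Γ c A a μ x * c x B b))
    + (∑ A, ∑ B, eta' p A B * (c x A a * Mm Γ c B b μ x)) = 0 := by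
    intro x a b μ
    have key := hcompτ x a b μ
    rw [pdτ x a b μ, hGt1 x a b μ, hGt2 x a b μ] at key
    rw [← key]
    simp only [← Finset.sum_sub_distrib, ← Finset.sum_add_distrib]
    refine Finset.sum_congr rfl fun A _ => Finset.sum_congr rfl fun B _ => ?_
    simp only [Mm]
    ring
  have contr : ∀ (u v : Fin d → ℝ) (x : Spc d) (μ : Fin d),
      (∑ A, ∑ B, eta' p A B * ((∑ a, Mm Γ c A a μ x * u a) * (∑ b, c x B b * v b)))
    + (∑ A, ∑ B, eta' p A B * ((∑ a, c x A a * u a) * (∑ b, Mm Γ c B b μ x * v b))) = 0 := by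
    intro u v x μ
    have h0 : ∀ a b : Fin d, (∑ A, ∑ B, eta' p A B
        * (Mm Γ c A a μ x * c x B b + c x A a * Mm Γ c B b μ x)) = 0 := by
      intro a b
      have hn := nabla x a b μ
      rw [← hn]
      simp only [← Finset.sum_add_distrib]
      exact Finset.sum_congr rfl fun A _ => Finset.sum_congr rfl fun B _ => by ring
    have h1 := contract4 (eta' p) (fun A a => Mm Γ c A a μ x) (fun B b => c x B b) u v
    have h2 := contract4 (eta' p) (fun A a => c x A a) (fun B b => Mm Γ c B b μ x) u v
    rw [← h1, ← h2]
    simp only [← Finset.sum_add_distrib, ← mul_add]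
    refine Finset.sum_eq_zero fun a _ => Finset.sum_eq_zero fun b _ => ?_
    rw [h0 a b, mul_zero]
  have tr0 : ∀ (Z : Spc d → Fin d → ℝ), (∀ x a, ∑ b, τ x a b * Z x b = 0) →
      ∀ (x : Spc d) (B : Fin (p+1)), ∑ b, c x B b * Z x b = 0 := by
    intro Z hZ x C
    have h1 := contract4 (eta' p) (fun A a => c x A a) (fun B b => c x B b)
      (fun a => t x C a) (fun b => Z x b)
    have h0 : ∑ a, ∑ b, t x C a * Z x b * (∑ A, ∑ B, eta' p A B * (c x A a * c x B b))
        = 0 := by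
      refine Finset.sum_eq_zero fun a _ => ?_
      calc ∑ b, t x C a * Z x b * (∑ A, ∑ B, eta' p A B * (c x A a * c x B b))
          = ∑ b, t x C a * (τ x a b * Z x b) :=
            Finset.sum_congr rfl fun b _ => by rw [hτcc' x a b]; ring
        _ = t x C a * ∑ b, τ x a b * Z x b := by rw [Finset.mul_sum]
        _ = 0 := by rw [hZ x a, mul_zero]
    rw [h1] at h0
    simp only [hdual] at h0
    rw [collapse C (fun B => ∑ b, c x B b * Z x b)] at h0
    exact (mul_eq_zero.mp h0).resolve_left (eta'_ne p C)
  have MZ0 : ∀ (Z : Spc d → Fin d → ℝ),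
      (∀ (x : Spc d) (B : Fin (p+1)), ∑ b, c x B b * Z x b = 0) →
      ∀ (x : Spc d) (A : Fin (p+1)) (μ : Fin d), ∑ b, Mm Γ c A b μ x * Z x b = 0 := by
    intro Z hZ x C μ
    have h0 := contr (fun a => t x C a) (fun b => Z x b) x μ
    simp only [hZ, mul_zero, zero_mul, Finset.sum_const_zero, zero_add, add_zero,
      hdual] at h0
    rw [collapse C (fun B => ∑ b, Mm Γ c B b μ x * Z x b)] at h0
    exact (mul_eq_zero.mp h0).resolve_left (eta'_ne p C)
  have sym0 : ∀ (x : Spc d) (μ : Fin d) (B C : Fin (p+1)),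
      (∑ A, eta' p A C * (∑ a, Mm Γ c A a μ x * t x B a))
    + (∑ A, eta' p B A * (∑ a, Mm Γ c A a μ x * t x C a)) = 0 := by
    intro x μ B C
    have h0 := contr (fun a => t x B a) (fun b => t x C b) x μ
    simp only [hdual] at h0
    have e1 : (∑ A, ∑ B', eta' p A B' * ((∑ a, Mm Γ c A a μ x * t x B a)
          * (if C = B' then (1:ℝ) else 0)))
        = ∑ A, eta' p A C * (∑ a, Mm Γ c A a μ x * t x B a) := by
      refine Finset.sum_congr rfl fun A _ => ?_
      rw [Finset.sum_eq_single_of_mem C (Finset.mem_univ C)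
        (fun B' _ hB' => by rw [if_neg (Ne.symm hB')]; ring)]
      rw [if_pos rfl]; ring
    have e2 : (∑ A, ∑ B', eta' p A B' * ((if B = A then (1:ℝ) else 0)
          * (∑ b, Mm Γ c B' b μ x * t x C b)))
        = ∑ B', eta' p B B' * (∑ b, Mm Γ c B' b μ x * t x C b) := by
      rw [Finset.sum_eq_single_of_mem B (Finset.mem_univ B)
        (fun A _ hA => Finset.sum_eq_zero fun B' _ => by rw [if_neg (Ne.symm hA)]; ring)]
      exact Finset.sum_congr rfl fun B' _ => by rw [if_pos rfl]; ring
    rw [e1, e2] at h0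
    exact h0
  have MV := MZ0 V (tr0 V hVtr)
  have MW := MZ0 W (tr0 W hWtr)
  constructor
  · intro x A
    have e : ∀ μ ν : Fin d, V x μ * W x ν * dcForm c A μ ν x
        = (V x μ * W x ν * Mm Γ c A ν μ x - V x μ * W x ν * Mm Γ c A μ ν x)
          + (V x μ * W x ν * (∑ e, Γ x e ν μ * c x A e)
             - V x μ * W x ν * (∑ e, Γ x e μ ν * c x A e)) := by
      intro μ ν; simp only [dcForm, Mm]; ring
    have T1 : ∑ μ, ∑ ν, V x μ * W x ν * Mm Γ c A ν μ x = 0 := by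
      refine Finset.sum_eq_zero fun μ _ => ?_
      calc ∑ ν, V x μ * W x ν * Mm Γ c A ν μ x
          = V x μ * ∑ ν, Mm Γ c A ν μ x * W x ν := by
            rw [Finset.mul_sum]; exact Finset.sum_congr rfl fun ν _ => by ring
        _ = 0 := by rw [MW x A μ, mul_zero]
    have T3 : ∑ μ, ∑ ν, V x μ * W x ν * Mm Γ c A μ ν x = 0 := by
      rw [Finset.sum_comm]
      refine Finset.sum_eq_zero fun ν _ => ?_
      calc ∑ μ, V x μ * W x ν * Mm Γ c A μ ν x
          = W x ν * ∑ μ, Mm Γ c A μ ν x * V x μ := by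
            rw [Finset.mul_sum]; exact Finset.sum_congr rfl fun μ _ => by ring
        _ = 0 := by rw [MV x A ν, mul_zero]
    have rhs1 : ∑ μ, ∑ ν, V x μ * W x ν * (∑ e, Γ x e ν μ * c x A e)
        = ∑ μ, ∑ ν, ∑ l, c x A l * Γ x l μ ν * (W x μ * V x ν) := by
      rw [Finset.sum_comm]
      refine Finset.sum_congr rfl fun k _ => Finset.sum_congr rfl fun m _ => ?_
      rw [Finset.mul_sum]
      exact Finset.sum_congr rfl fun e _ => by ring
    have rhs2 : ∑ μ, ∑ ν, V x μ * W x ν * (∑ e, Γ x e μ ν * c x A e)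
        = ∑ μ, ∑ ν, ∑ l, c x A l * Γ x l μ ν * (V x μ * W x ν) := by
      refine Finset.sum_congr rfl fun μ _ => Finset.sum_congr rfl fun ν _ => ?_
      rw [Finset.mul_sum]
      exact Finset.sum_congr rfl fun e _ => by ring
    have lhs_eq : ∑ l, c x A l * torVec Γ V W l x
        = ∑ μ, ∑ ν, ∑ l, c x A l * Γ x l μ ν * (W x μ * V x ν - V x μ * W x ν) := by
      simp only [torVec, Finset.mul_sum]
      rw [Finset.sum_comm]
      refine Finset.sum_congr rfl fun μ _ => ?_
      rw [Finset.sum_comm]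
      exact Finset.sum_congr rfl fun ν _ => Finset.sum_congr rfl fun l _ => by ring
    calc ∑ l, c x A l * torVec Γ V W l x
        = ∑ μ, ∑ ν, ∑ l, c x A l * Γ x l μ ν * (W x μ * V x ν - V x μ * W x ν) := lhs_eq
      _ = ∑ μ, ∑ ν, ∑ l, c x A l * Γ x l μ ν * (W x μ * V x ν)
          - ∑ μ, ∑ ν, ∑ l, c x A l * Γ x l μ ν * (V x μ * W x ν) := by
          simp only [← Finset.sum_sub_distrib]
          exact Finset.sum_congr rfl fun μ _ => Finset.sum_congr rfl fun ν _ =>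
            Finset.sum_congr rfl fun l _ => by ring
      _ = ∑ μ, ∑ ν, V x μ * W x ν * (∑ e, Γ x e ν μ * c x A e)
          - ∑ μ, ∑ ν, V x μ * W x ν * (∑ e, Γ x e μ ν * c x A e) := by rw [rhs1, rhs2]
      _ = (∑ μ, ∑ ν, V x μ * W x ν * Mm Γ c A ν μ x
            - ∑ μ, ∑ ν, V x μ * W x ν * Mm Γ c A μ ν x)
          + (∑ μ, ∑ ν, V x μ * W x ν * (∑ e, Γ x e ν μ * c x A e)
             - ∑ μ, ∑ ν, V x μ * W x ν * (∑ e, Γ x e μ ν * c x A e)) := by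
          rw [T1, T3]; ring
      _ = ∑ μ, ∑ ν, V x μ * W x ν * dcForm c A μ ν x := by
          simp only [← Finset.sum_sub_distrib, ← Finset.sum_add_distrib]
          exact Finset.sum_congr rfl fun μ _ => Finset.sum_congr rfl fun ν _ => (e μ ν).symm
  · intro x B C
    have key : ∀ (A C' : Fin (p+1)),
        (∑ l, c x A l * torVec Γ (fun y m => t y C' m) V l x)
        - (∑ μ, ∑ ν, t x C' μ * V x ν * dcForm c A μ ν x)
        = ∑ ν, V x ν * (∑ μ, Mm Γ c A μ ν x * t x C' μ) := by
      intro A C'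
      have lhs_eq : ∑ l, c x A l * torVec Γ (fun y m => t y C' m) V l x
          = ∑ μ, ∑ ν, ∑ l, c x A l * Γ x l μ ν * (V x μ * t x C' ν - t x C' μ * V x ν) := by
        simp only [torVec, Finset.mul_sum]
        rw [Finset.sum_comm]
        refine Finset.sum_congr rfl fun μ _ => ?_
        rw [Finset.sum_comm]
        exact Finset.sum_congr rfl fun ν _ => Finset.sum_congr rfl fun l _ => by ring
      have lhs_split : ∑ μ, ∑ ν, ∑ l, c x A l * Γ x l μ ν
              * (V x μ * t x C' ν - t x C' μ * V x ν)
          = ∑ μ, ∑ ν, ∑ l, c x A l * Γ x l μ ν * (V x μ * t x C' ν)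
            - ∑ μ, ∑ ν, ∑ l, c x A l * Γ x l μ ν * (t x C' μ * V x ν) := by
        simp only [← Finset.sum_sub_distrib]
        exact Finset.sum_congr rfl fun μ _ => Finset.sum_congr rfl fun ν _ =>
          Finset.sum_congr rfl fun l _ => by ring
      have T1 : ∑ μ, ∑ ν, t x C' μ * V x ν * Mm Γ c A ν μ x = 0 := by
        refine Finset.sum_eq_zero fun μ _ => ?_
        calc ∑ ν, t x C' μ * V x ν * Mm Γ c A ν μ x
            = t x C' μ * ∑ ν, Mm Γ c A ν μ x * V x ν := by
              rw [Finset.mul_sum]; exact Finset.sum_congr rfl fun ν _ => by ring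
          _ = 0 := by rw [MV x A μ, mul_zero]
      have rhs1 : ∑ μ, ∑ ν, t x C' μ * V x ν * (∑ e, Γ x e ν μ * c x A e)
          = ∑ μ, ∑ ν, ∑ l, c x A l * Γ x l μ ν * (V x μ * t x C' ν) := by
        rw [Finset.sum_comm]
        refine Finset.sum_congr rfl fun k _ => Finset.sum_congr rfl fun m _ => ?_
        rw [Finset.mul_sum]
        exact Finset.sum_congr rfl fun e _ => by ring
      have rhs2 : ∑ μ, ∑ ν, t x C' μ * V x ν * (∑ e, Γ x e μ ν * c x A e)
          = ∑ μ, ∑ ν, ∑ l, c x A l * Γ x l μ ν * (t x C' μ * V x ν) := by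
        refine Finset.sum_congr rfl fun μ _ => Finset.sum_congr rfl fun ν _ => ?_
        rw [Finset.mul_sum]
        exact Finset.sum_congr rfl fun e _ => by ring
      have e : ∀ μ ν : Fin d, t x C' μ * V x ν * dcForm c A μ ν x
          = (t x C' μ * V x ν * Mm Γ c A ν μ x - t x C' μ * V x ν * Mm Γ c A μ ν x)
            + (t x C' μ * V x ν * (∑ e, Γ x e ν μ * c x A e)
               - t x C' μ * V x ν * (∑ e, Γ x e μ ν * c x A e)) := by
        intro μ ν; simp only [dcForm, Mm]; ring
      have dd_eq : ∑ μ, ∑ ν, t x C' μ * V x ν * dcForm c A μ ν x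
          = (∑ μ, ∑ ν, t x C' μ * V x ν * Mm Γ c A ν μ x
             - ∑ μ, ∑ ν, t x C' μ * V x ν * Mm Γ c A μ ν x)
            + (∑ μ, ∑ ν, t x C' μ * V x ν * (∑ e, Γ x e ν μ * c x A e)
               - ∑ μ, ∑ ν, t x C' μ * V x ν * (∑ e, Γ x e μ ν * c x A e)) := by
        simp only [← Finset.sum_sub_distrib, ← Finset.sum_add_distrib]
        exact Finset.sum_congr rfl fun μ _ => Finset.sum_congr rfl fun ν _ => e μ ν
      have reorder : ∑ μ, ∑ ν, t x C' μ * V x ν * Mm Γ c A μ ν x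
          = ∑ ν, V x ν * (∑ μ, Mm Γ c A μ ν x * t x C' μ) := by
        rw [Finset.sum_comm]
        refine Finset.sum_congr rfl fun ν _ => ?_
        rw [Finset.mul_sum]
        exact Finset.sum_congr rfl fun μ _ => by ring
      rw [lhs_eq, lhs_split, ← rhs1, ← rhs2, dd_eq, T1, ← reorder]
      ring
    have main : (∑ A, (eta' p A B * (∑ l, c x A l * torVec Γ (fun y m => t y C m) V l x)
           + eta' p A C * (∑ l, c x A l * torVec Γ (fun y m => t y B m) V l x)))
        - (∑ A, (eta' p A B * (∑ μ, ∑ ν, t x C μ * V x ν * dcForm c A μ ν x)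
           + eta' p A C * (∑ μ, ∑ ν, t x B μ * V x ν * dcForm c A μ ν x)))
        = ∑ A, (eta' p A B * (∑ ν, V x ν * (∑ μ, Mm Γ c A μ ν x * t x C μ))
             + eta' p A C * (∑ ν, V x ν * (∑ μ, Mm Γ c A μ ν x * t x B μ))) := by
      rw [← Finset.sum_sub_distrib]
      refine Finset.sum_congr rfl fun A _ => ?_
      rw [← key A C, ← key A B]
      ring
    have zero : ∑ A, (eta' p A B * (∑ ν, V x ν * (∑ μ, Mm Γ c A μ ν x * t x C μ))
             + eta' p A C * (∑ ν, V x ν * (∑ μ, Mm Γ c A μ ν x * t x B μ))) = 0 := by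
      calc ∑ A, (eta' p A B * (∑ ν, V x ν * (∑ μ, Mm Γ c A μ ν x * t x C μ))
             + eta' p A C * (∑ ν, V x ν * (∑ μ, Mm Γ c A μ ν x * t x B μ)))
          = ∑ A, ∑ ν, (eta' p A B * (V x ν * (∑ μ, Mm Γ c A μ ν x * t x C μ))
              + eta' p A C * (V x ν * (∑ μ, Mm Γ c A μ ν x * t x B μ))) := by
            refine Finset.sum_congr rfl fun A _ => ?_
            rw [Finset.mul_sum, Finset.mul_sum, ← Finset.sum_add_distrib]
        _ = ∑ ν, ∑ A, (eta' p A B * (V x ν * (∑ μ, Mm Γ c A μ ν x * t x C μ))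
              + eta' p A C * (V x ν * (∑ μ, Mm Γ c A μ ν x * t x B μ))) := Finset.sum_comm
        _ = ∑ ν, V x ν * ((∑ A, eta' p A B * (∑ μ, Mm Γ c A μ ν x * t x C μ))
              + (∑ A, eta' p A C * (∑ μ, Mm Γ c A μ ν x * t x B μ))) := by
            refine Finset.sum_congr rfl fun ν _ => ?_
            rw [mul_add, Finset.mul_sum, Finset.mul_sum, ← Finset.sum_add_distrib]
            exact Finset.sum_congr rfl fun A _ => by ring
        _ = 0 := by
            refine Finset.sum_eq_zero fun ν _ => ?_
            have hs := sym0 x ν C B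
            rw [show (∑ A, eta' p A C * (∑ μ, Mm Γ c A μ ν x * t x B μ))
                = ∑ A, eta' p C A * (∑ μ, Mm Γ c A μ ν x * t x B μ) from
              Finset.sum_congr rfl fun A _ => by rw [eta'_symm]]
            rw [hs, mul_zero]
    have := main.trans zero
    linarith
end
end

section
/- The set of tensors S^a_{bc} on M satisfying S^a_{[bc]} = 0, S^d_{a(b} τ_{c)d} = 0, and h^{d(c} S^{b)}_{ad} = 0 forms a vector space 𝔙(M,τ,h), and the difference of any two torsion-free connections compatible with an Augustinian pNC structure (M,τ,h) lies in 𝔙(M,τ,h); conversely adding an element of 𝔙(M,τ,h) to such a connection yields another torsion-free compatible connection. Hence 𝒟₀(M,τ,h) is an affine space modelled on 𝔙(M,τ,h). -/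
noncomputable section

/-- Membership in `𝔙(M,τ,h)`: smooth `S^a_{bc}` with `S^a_{[bc]} = 0`,
`S^d_{a(b} τ_{c)d} = 0` and `h^{d(c} S^{b)}_{ad} = 0`. -/
def InVspace (d : ℕ) (τ h : Spc d → Fin d → Fin d → ℝ)
    (S : Spc d → Fin d → Fin d → Fin d → ℝ) : Prop :=
  (∀ a b c₀, Sm (fun x => S x a b c₀)) ∧
  (∀ x a b c₀, S x a b c₀ = S x a c₀ b) ∧
  (∀ x a b c₀, ∑ e, (S x e a b * τ x c₀ e + S x e a c₀ * τ x b e) = 0) ∧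
  (∀ x a b c₀, ∑ e, (h x e c₀ * S x b a e + h x e b * S x c₀ a e) = 0)

/-- Membership in `𝒟₀(M,τ,h)`: smooth, torsion-free, compatible connections. -/
def IsD0 (d : ℕ) (τ h : Spc d → Fin d → Fin d → ℝ)
    (Γ : Spc d → Fin d → Fin d → Fin d → ℝ) : Prop :=
  (∀ l μ ν, Sm (fun x => Γ x l μ ν)) ∧
  (∀ x l μ ν, Γ x l μ ν = Γ x l ν μ) ∧
  CompatLower d Γ τ ∧ CompatUpper d Γ h

/-- A ternary map symmetric in the first two slots and antisymmetric in the last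
two slots vanishes. -/
lemma zero_of_sym12_anti23 {α : Type*} (F : α → α → α → ℝ)
    (hs : ∀ a b c, F a b c = F b a c)
    (ha : ∀ a b c, F a b c + F a c b = 0) : ∀ a b c, F a b c = 0 := by
  intro a b c
  have h1 := hs a b c
  have h2 := ha b a c
  have h3 := hs b c a
  have h4 := ha c b a
  have h5 := hs c a b
  have h6 := ha a c b
  linarith

/-- A ternary map symmetric in the first two slots and antisymmetric in the outer
two slots vanishes. -/
lemma zero_of_sym12_anti13 {α : Type*} (F : α → α → α → ℝ)
    (hs : ∀ a b c, F a b c = F b a c)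
    (ha : ∀ a b c, F a b c + F c b a = 0) : ∀ a b c, F a b c = 0 := by
  intro a b c
  have h1 := hs a b c
  have h2 := ha b a c
  have h3 := hs c a b
  have h4 := ha a c b
  have h5 := hs b c a
  have h6 := ha c b a
  linarith

/-- Proposition 5: `𝔙(M,τ,h)` is a vector space (a submodule of the space of tensors),
the difference of any two torsion-free compatible connections lies in `𝔙(M,τ,h)`, and
adding an element of `𝔙(M,τ,h)` to a torsion-free compatible connection yields another
one.  Hence `𝒟₀(M,τ,h)` is an affine space modelled on `𝔙(M,τ,h)`. -/
theorem D0_affine_space (d : ℕ)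
    (τ h : Spc d → Fin d → Fin d → ℝ)
    (hτsm : ∀ a b, Sm (fun x => τ x a b)) (hhsm : ∀ a b, Sm (fun x => h x a b))
    (hτsym : ∀ x a b, τ x a b = τ x b a) (hhsym : ∀ x a b, h x a b = h x b a)
    (hhτ : ∀ x a b, ∑ e, h x a e * τ x e b = 0) :
    (∃ W : Submodule ℝ (Spc d → Fin d → Fin d → Fin d → ℝ),
      ∀ S, S ∈ W ↔ InVspace d τ h S) ∧
    (∀ Γ Γ', IsD0 d τ h Γ → IsD0 d τ h Γ' → InVspace d τ h (Γ - Γ')) ∧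
    (∀ Γ S, IsD0 d τ h Γ → InVspace d τ h S → IsD0 d τ h (Γ + S)) := by
  -- Key fact 1: if S is symmetric in its last two indices and satisfies the
  -- InVspace τ-condition, then ∑ e, S e p q * τ e r = 0.
  have Fz_of_inV : ∀ S : Spc d → Fin d → Fin d → Fin d → ℝ,
      (∀ x a b c₀, S x a b c₀ = S x a c₀ b) →
      (∀ x a b c₀, ∑ e, (S x e a b * τ x c₀ e + S x e a c₀ * τ x b e) = 0) →
      ∀ x p q r, ∑ e, S x e p q * τ x e r = 0 := by
    intro S hSsym h3 x
    refine zero_of_sym12_anti23 (fun p q r => ∑ e, S x e p q * τ x e r) ?_ ?_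
    · intro a b c
      exact Finset.sum_congr rfl fun e _ => by rw [hSsym x e a b]
    · intro a b c
      have key := h3 x a b c
      rw [Finset.sum_add_distrib] at key
      have e1 : ∑ e, S x e a b * τ x c e = ∑ e, S x e a b * τ x e c :=
        Finset.sum_congr rfl fun e _ => by rw [hτsym x c e]
      have e2 : ∑ e, S x e a c * τ x b e = ∑ e, S x e a c * τ x e b :=
        Finset.sum_congr rfl fun e _ => by rw [hτsym x b e]
      simp only [e1, e2] at key
      simpa using key
  -- Key fact 2: if S is symmetric in its last two indices and satisfies the
  -- relation coming from a difference of compatible connections, then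
  -- ∑ e, S e p q * τ e r = 0.
  have Fz_of_diff : ∀ S : Spc d → Fin d → Fin d → Fin d → ℝ,
      (∀ x a b c₀, S x a b c₀ = S x a c₀ b) →
      (∀ x a b c₀, (∑ e, S x e a c₀ * τ x e b) + (∑ e, S x e b c₀ * τ x a e) = 0) →
      ∀ x p q r, ∑ e, S x e p q * τ x e r = 0 := by
    intro S hSsym hrel x
    refine zero_of_sym12_anti13 (fun p q r => ∑ e, S x e p q * τ x e r) ?_ ?_
    · intro a b c
      exact Finset.sum_congr rfl fun e _ => by rw [hSsym x e a b]
    · intro a b c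
      have key := hrel x a c b
      have e2 : ∑ e, S x e c b * τ x a e = ∑ e, S x e c b * τ x e a :=
        Finset.sum_congr rfl fun e _ => by rw [hτsym x a e]
      rw [e2] at key
      simpa using key
  refine ⟨?_, ?_, ?_⟩
  · -- 𝔙(M,τ,h) is a submodule
    refine ⟨{ carrier := {S | InVspace d τ h S}
              add_mem' := ?_
              zero_mem' := ?_
              smul_mem' := ?_ }, fun S => Iff.rfl⟩
    · rintro S T ⟨hS1, hS2, hS3, hS4⟩ ⟨hT1, hT2, hT3, hT4⟩
      refine ⟨?_, ?_, ?_, ?_⟩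
      · intro a b c₀
        simp only [Pi.add_apply]
        exact (hS1 a b c₀).add (hT1 a b c₀)
      · intro x a b c₀
        simp only [Pi.add_apply, hS2 x a b c₀, hT2 x a b c₀]
      · intro x a b c₀
        have kS := hS3 x a b c₀
        have kT := hT3 x a b c₀
        calc ∑ e, ((S + T) x e a b * τ x c₀ e + (S + T) x e a c₀ * τ x b e)
            = ∑ e, ((S x e a b * τ x c₀ e + S x e a c₀ * τ x b e)
                + (T x e a b * τ x c₀ e + T x e a c₀ * τ x b e)) :=
              Finset.sum_congr rfl fun e _ => by simp only [Pi.add_apply]; ring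
          _ = 0 := by rw [Finset.sum_add_distrib, kS, kT, add_zero]
      · intro x a b c₀
        have kS := hS4 x a b c₀
        have kT := hT4 x a b c₀
        calc ∑ e, (h x e c₀ * (S + T) x b a e + h x e b * (S + T) x c₀ a e)
            = ∑ e, ((h x e c₀ * S x b a e + h x e b * S x c₀ a e)
                + (h x e c₀ * T x b a e + h x e b * T x c₀ a e)) :=
              Finset.sum_congr rfl fun e _ => by simp only [Pi.add_apply]; ring
          _ = 0 := by rw [Finset.sum_add_distrib, kS, kT, add_zero]
    · refine ⟨?_, ?_, ?_, ?_⟩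
      · intro a b c₀
        simpa [Sm] using (contDiff_const : ContDiff ℝ (⊤ : ℕ∞) fun _ : Spc d => (0 : ℝ))
      · intro x a b c₀; simp
      · intro x a b c₀; simp
      · intro x a b c₀; simp
    · rintro r S ⟨hS1, hS2, hS3, hS4⟩
      refine ⟨?_, ?_, ?_, ?_⟩
      · intro a b c₀
        simp only [Pi.smul_apply, smul_eq_mul]
        exact (contDiff_const (c := r)).mul (hS1 a b c₀)
      · intro x a b c₀
        simp only [Pi.smul_apply, smul_eq_mul, hS2 x a b c₀]
      · intro x a b c₀
        have kS := hS3 x a b c₀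
        calc ∑ e, ((r • S) x e a b * τ x c₀ e + (r • S) x e a c₀ * τ x b e)
            = r * ∑ e, (S x e a b * τ x c₀ e + S x e a c₀ * τ x b e) := by
              rw [Finset.mul_sum]
              exact Finset.sum_congr rfl fun e _ => by
                simp only [Pi.smul_apply, smul_eq_mul]; ring
          _ = 0 := by rw [kS, mul_zero]
      · intro x a b c₀
        have kS := hS4 x a b c₀
        calc ∑ e, (h x e c₀ * (r • S) x b a e + h x e b * (r • S) x c₀ a e)
            = r * ∑ e, (h x e c₀ * S x b a e + h x e b * S x c₀ a e) := by
              rw [Finset.mul_sum]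
              exact Finset.sum_congr rfl fun e _ => by
                simp only [Pi.smul_apply, smul_eq_mul]; ring
          _ = 0 := by rw [kS, mul_zero]
  · -- difference of two connections lies in 𝔙
    rintro Γ Γ' ⟨hΓ1, hΓ2, hΓL, hΓU⟩ ⟨hΓ'1, hΓ'2, hΓ'L, hΓ'U⟩
    have hSsym : ∀ x a b c₀, (Γ - Γ') x a b c₀ = (Γ - Γ') x a c₀ b := by
      intro x a b c₀
      simp only [Pi.sub_apply, hΓ2 x a b c₀, hΓ'2 x a b c₀]
    -- the lower relation for the difference
    have hrelL : ∀ x a b c₀, (∑ e, (Γ - Γ') x e a c₀ * τ x e b)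
        + (∑ e, (Γ - Γ') x e b c₀ * τ x a e) = 0 := by
      intro x a b c₀
      have k1 := hΓL x a b c₀
      have k2 := hΓ'L x a b c₀
      have s1 : ∑ e, (Γ - Γ') x e a c₀ * τ x e b
          = (∑ e, Γ x e a c₀ * τ x e b) - ∑ e, Γ' x e a c₀ * τ x e b := by
        rw [← Finset.sum_sub_distrib]
        exact Finset.sum_congr rfl fun e _ => by simp only [Pi.sub_apply]; ring
      have s2 : ∑ e, (Γ - Γ') x e b c₀ * τ x a e
          = (∑ e, Γ x e b c₀ * τ x a e) - ∑ e, Γ' x e b c₀ * τ x a e := by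
        rw [← Finset.sum_sub_distrib]
        exact Finset.sum_congr rfl fun e _ => by simp only [Pi.sub_apply]; ring
      rw [s1, s2]; linarith
    have FzS := Fz_of_diff (Γ - Γ') hSsym hrelL
    refine ⟨?_, hSsym, ?_, ?_⟩
    · intro a b c₀
      simp only [Pi.sub_apply]
      exact (hΓ1 a b c₀).sub (hΓ'1 a b c₀)
    · intro x a b c₀
      have t1 : ∑ e, (Γ - Γ') x e a b * τ x c₀ e = 0 := by
        rw [show ∑ e, (Γ - Γ') x e a b * τ x c₀ e
            = ∑ e, (Γ - Γ') x e a b * τ x e c₀ from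
          Finset.sum_congr rfl fun e _ => by rw [hτsym x c₀ e]]
        exact FzS x a b c₀
      have t2 : ∑ e, (Γ - Γ') x e a c₀ * τ x b e = 0 := by
        rw [show ∑ e, (Γ - Γ') x e a c₀ * τ x b e
            = ∑ e, (Γ - Γ') x e a c₀ * τ x e b from
          Finset.sum_congr rfl fun e _ => by rw [hτsym x b e]]
        exact FzS x a c₀ b
      rw [Finset.sum_add_distrib, t1, t2, add_zero]
    · intro x a b c₀
      -- the upper relation for the difference
      have k1 := hΓU x b c₀ a
      have k2 := hΓ'U x b c₀ a
      have s1 : ∑ e, (Γ - Γ') x b e a * h x e c₀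
          = (∑ e, Γ x b e a * h x e c₀) - ∑ e, Γ' x b e a * h x e c₀ := by
        rw [← Finset.sum_sub_distrib]
        exact Finset.sum_congr rfl fun e _ => by simp only [Pi.sub_apply]; ring
      have s2 : ∑ e, (Γ - Γ') x c₀ e a * h x b e
          = (∑ e, Γ x c₀ e a * h x b e) - ∑ e, Γ' x c₀ e a * h x b e := by
        rw [← Finset.sum_sub_distrib]
        exact Finset.sum_congr rfl fun e _ => by simp only [Pi.sub_apply]; ring
      have hrelU : (∑ e, (Γ - Γ') x b e a * h x e c₀)
          + (∑ e, (Γ - Γ') x c₀ e a * h x b e) = 0 := by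
        rw [s1, s2]
        have a1 : ∑ e, Γ x b e a * h x e c₀ = ∑ e, Γ x b e a * h x e c₀ := rfl
        linarith
      calc ∑ e, (h x e c₀ * (Γ - Γ') x b a e + h x e b * (Γ - Γ') x c₀ a e)
          = ∑ e, ((Γ - Γ') x b e a * h x e c₀ + (Γ - Γ') x c₀ e a * h x b e) :=
            Finset.sum_congr rfl fun e _ => by
              rw [hSsym x b a e, hSsym x c₀ a e, hhsym x e b]; ring
        _ = (∑ e, (Γ - Γ') x b e a * h x e c₀)
            + ∑ e, (Γ - Γ') x c₀ e a * h x b e := Finset.sum_add_distrib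
        _ = 0 := hrelU
  · -- adding an element of 𝔙 to a connection in 𝒟₀
    rintro Γ S ⟨hΓ1, hΓ2, hΓL, hΓU⟩ ⟨hS1, hS2, hS3, hS4⟩
    have FzS := Fz_of_inV S hS2 hS3
    refine ⟨?_, ?_, ?_, ?_⟩
    · intro a b c₀
      simp only [Pi.add_apply]
      exact (hΓ1 a b c₀).add (hS1 a b c₀)
    · intro x a b c₀
      simp only [Pi.add_apply, hΓ2 x a b c₀, hS2 x a b c₀]
    · intro x a b c₀
      have k1 := hΓL x a b c₀
      have s1 : ∑ e, (Γ + S) x e a c₀ * τ x e b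
          = (∑ e, Γ x e a c₀ * τ x e b) + ∑ e, S x e a c₀ * τ x e b := by
        rw [← Finset.sum_add_distrib]
        exact Finset.sum_congr rfl fun e _ => by simp only [Pi.add_apply]; ring
      have s2 : ∑ e, (Γ + S) x e b c₀ * τ x a e
          = (∑ e, Γ x e b c₀ * τ x a e) + ∑ e, S x e b c₀ * τ x a e := by
        rw [← Finset.sum_add_distrib]
        exact Finset.sum_congr rfl fun e _ => by simp only [Pi.add_apply]; ring
      have z1 : ∑ e, S x e a c₀ * τ x e b = 0 := FzS x a c₀ b
      have z2 : ∑ e, S x e b c₀ * τ x a e = 0 := by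
        rw [show ∑ e, S x e b c₀ * τ x a e = ∑ e, S x e b c₀ * τ x e a from
          Finset.sum_congr rfl fun e _ => by rw [hτsym x a e]]
        exact FzS x b c₀ a
      rw [s1, s2, z1, z2]; linarith
    · intro x a b c₀
      have k1 := hΓU x a b c₀
      have s1 : ∑ e, (Γ + S) x a e c₀ * h x e b
          = (∑ e, Γ x a e c₀ * h x e b) + ∑ e, S x a e c₀ * h x e b := by
        rw [← Finset.sum_add_distrib]
        exact Finset.sum_congr rfl fun e _ => by simp only [Pi.add_apply]; ring
      have s2 : ∑ e, (Γ + S) x b e c₀ * h x a e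
          = (∑ e, Γ x b e c₀ * h x a e) + ∑ e, S x b e c₀ * h x a e := by
        rw [← Finset.sum_add_distrib]
        exact Finset.sum_congr rfl fun e _ => by simp only [Pi.add_apply]; ring
      have k4 := hS4 x c₀ a b
      -- k4 : ∑ e, (h x e b * S x a c₀ e + h x e a * S x b c₀ e) = 0
      have z : (∑ e, S x a e c₀ * h x e b) + ∑ e, S x b e c₀ * h x a e = 0 := by
        rw [Finset.sum_add_distrib] at k4
        have e1 : ∑ e, S x a e c₀ * h x e b = ∑ e, h x e b * S x a c₀ e :=
          Finset.sum_congr rfl fun e _ => by rw [hS2 x a e c₀]; ring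
        have e2 : ∑ e, S x b e c₀ * h x a e = ∑ e, h x e a * S x b c₀ e :=
          Finset.sum_congr rfl fun e _ => by
            rw [hS2 x b e c₀, hhsym x a e]; ring
        rw [e1, e2]; linarith
      rw [s1, s2]; linarith
end
end

section
/- Let φ be the linear map from (p+1)-tuples of 2-forms F_A on M to tensors, F_A ↦ S^a_{bc} = τ^A_{(b} F_{|A|c)d} h^{ad}, associated to a longitudinal frame τ_A. Then the kernel of φ consists exactly of the tuples K_A of 2-forms satisfying K_A(τ_B, V) = −K_B(τ_A, V) and K_A(V,W) = 0 for all transverse vector fields V, W. -/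
noncomputable section

lemma contractL {ι : Type*} [Fintype ι] {d : ℕ} (u : Fin d → ℝ) (g : ι → ℝ)
    (w : ι → Fin d → ℝ) :
    ∑ a, u a * ∑ X, g X * w X a = ∑ X, g X * ∑ a, w X a * u a := by
  simp_rw [Finset.mul_sum]
  rw [Finset.sum_comm]
  exact Finset.sum_congr rfl fun X _ => Finset.sum_congr rfl fun a _ => by ring

lemma contractR {ι : Type*} [Fintype ι] {d : ℕ} (v : Fin d → ℝ) (g : ι → ℝ)
    (w : ι → Fin d → ℝ) :
    ∑ b, (∑ X, g X * w X b) * v b = ∑ X, g X * ∑ b, w X b * v b := by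
  simp_rw [Finset.sum_mul]
  rw [Finset.sum_comm]
  exact Finset.sum_congr rfl fun X _ => by
    rw [Finset.mul_sum]; exact Finset.sum_congr rfl fun b _ => by ring

lemma contractL2 {ι κ : Type*} [Fintype ι] [Fintype κ] {d : ℕ} (u : Fin d → ℝ)
    (g : ι → κ → ℝ) (H : Fin d → κ → ℝ) :
    ∑ a, u a * ∑ X, ∑ Y, g X Y * H a Y = ∑ X, ∑ Y, g X Y * ∑ a, u a * H a Y := by
  simp_rw [Finset.mul_sum]
  rw [Finset.sum_comm]
  refine Finset.sum_congr rfl fun X _ => ?_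
  rw [Finset.sum_comm]
  exact Finset.sum_congr rfl fun Y _ => Finset.sum_congr rfl fun a _ => by ring

lemma swapin {ι κ σ : Type*} [Fintype ι] [Fintype κ] [Fintype σ]
    (g : ι → κ → ℝ) (r : σ → ℝ) (w : σ → κ → ℝ) :
    ∑ X, ∑ Y, g X Y * ∑ i, r i * w i Y = ∑ i, r i * ∑ X, ∑ Y, g X Y * w i Y := by
  simp_rw [Finset.mul_sum]
  rw [show (∑ X, ∑ Y, ∑ i, g X Y * (r i * w i Y))
      = ∑ X, ∑ i, ∑ Y, g X Y * (r i * w i Y) from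
    Finset.sum_congr rfl fun X _ => Finset.sum_comm ..]
  rw [Finset.sum_comm]
  exact Finset.sum_congr rfl fun i _ => Finset.sum_congr rfl fun X _ =>
    Finset.sum_congr rfl fun Y _ => by ring

/-- Proposition 6 (pointwise): the kernel of the map
`φ : F_A ↦ τ^A_{(b} F_{|A|c)d} h^{ad}` consists exactly of the tuples `K_A` of 2-forms
with `K_A(τ_B,V) = −K_B(τ_A,V)` and `K_A(V,W) = 0` for all transverse `V,W`.
Here everything is expressed in a Galilean `p`-frame `(t_A, e_i)` with dual co-frame
`(c^A, f^i)`, `τ_{ab} = η_{AB} c^A_a c^B_b` and `h^{ab} = δ^{ij} e_i^a e_j^b`. -/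
theorem kernel_of_phi (d p q : ℕ)
    (t : Fin (p+1) → Fin d → ℝ) (e : Fin q → Fin d → ℝ)
    (c : Fin (p+1) → Fin d → ℝ) (f : Fin q → Fin d → ℝ)
    (hct : ∀ A B, ∑ a, c A a * t B a = if A = B then (1:ℝ) else 0)
    (hce : ∀ A i, ∑ a, c A a * e i a = 0)
    (hft : ∀ i A, ∑ a, f i a * t A a = 0)
    (hfe : ∀ i j, ∑ a, f i a * e j a = if i = j then (1:ℝ) else 0)
    (hcomp : ∀ a b, ((∑ A, t A a * c A b) + ∑ i, e i a * f i b)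
      = if a = b then (1:ℝ) else 0)
    (K : Fin (p+1) → Matrix (Fin d) (Fin d) ℝ)
    (hKasym : ∀ A μ ν, K A μ ν = -K A ν μ) :
    (∀ a b c₀, (1/2 : ℝ) * ∑ A, ∑ e₀, (c A b * K A c₀ e₀ + c A c₀ * K A b e₀)
        * (∑ i, e i a * e i e₀) = 0)
    ↔ ((∀ A B (v : Fin d → ℝ),
          (∀ a, ∑ b, (∑ A', ∑ B', eta' p A' B' * c A' a * c B' b) * v b = 0) →
          (∑ μ, ∑ ν, t B μ * K A μ ν * v ν) = -(∑ μ, ∑ ν, t A μ * K B μ ν * v ν)) ∧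
        (∀ A (v w : Fin d → ℝ),
          (∀ a, ∑ b, (∑ A', ∑ B', eta' p A' B' * c A' a * c B' b) * v b = 0) →
          (∀ a, ∑ b, (∑ A', ∑ B', eta' p A' B' * c A' a * c B' b) * w b = 0) →
          (∑ μ, ∑ ν, v μ * K A μ ν * w ν) = 0)) := by
  classical
  -- ## transversality
  have hτ : ∀ a b, (∑ A', ∑ B', eta' p A' B' * c A' a * c B' b)
      = ∑ A', ((if A' = (0 : Fin (p+1)) then (-1:ℝ) else 1) * c A' a) * c A' b := by
    intro a b
    refine Finset.sum_congr rfl fun A' _ => ?_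
    simp [eta', ite_mul, Finset.sum_ite_eq, mul_assoc]
  have htrans : ∀ v : Fin d → ℝ,
      (∀ a, ∑ b, (∑ A', ∑ B', eta' p A' B' * c A' a * c B' b) * v b = 0)
      ↔ (∀ A, ∑ b, c A b * v b = 0) := by
    intro v
    have hexp : ∀ a, (∑ b, (∑ A', ∑ B', eta' p A' B' * c A' a * c B' b) * v b)
        = ∑ A', ((if A' = (0 : Fin (p+1)) then (-1:ℝ) else 1)
            * (∑ b, c A' b * v b)) * c A' a := by
      intro a
      simp_rw [hτ]
      rw [contractR v _ c]
      exact Finset.sum_congr rfl fun A' _ => by ring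
    constructor
    · intro h A
      have h3 : ∑ a, t A a * ∑ A', ((if A' = (0 : Fin (p+1)) then (-1:ℝ) else 1)
            * (∑ b, c A' b * v b)) * c A' a
          = (if A = (0:Fin (p+1)) then (-1:ℝ) else 1) * ∑ b, c A b * v b := by
        rw [contractL (t A) _ c]
        simp_rw [hct]
        simp [mul_ite, Finset.sum_ite_eq']
      have h4 : ∑ a, t A a * ∑ A', ((if A' = (0 : Fin (p+1)) then (-1:ℝ) else 1)
            * (∑ b, c A' b * v b)) * c A' a = 0 := by
        simp_rw [← hexp]
        simp [h]
      rw [h4] at h3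
      rcases eq_or_ne A 0 with hA | hA <;> simp [hA] at h3 <;> simp [hA, ← h3]
    · intro h a
      rw [hexp a]
      refine Finset.sum_eq_zero fun A' _ => ?_
      rw [h A', mul_zero, zero_mul]
  have hetrans : ∀ j, (∀ a, ∑ b, (∑ A', ∑ B', eta' p A' B' * c A' a * c B' b)
      * e j b = 0) := fun j => (htrans (e j)).2 (fun A => hce A j)
  -- ## decomposition of transverse vectors
  have hvdec : ∀ v : Fin d → ℝ, (∀ A, ∑ b, c A b * v b = 0) →
      ∀ b, v b = ∑ i, (∑ a, f i a * v a) * e i b := by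
    intro v hv b
    have h1 : v b = ∑ a, (if b = a then (1:ℝ) else 0) * v a := by
      simp [ite_mul]
    rw [h1]
    simp_rw [← hcomp]
    rw [show (∑ a, ((∑ A, t A b * c A a) + ∑ i, e i b * f i a) * v a)
        = (∑ a, (∑ A, t A b * c A a) * v a) + ∑ a, (∑ i, e i b * f i a) * v a from by
      rw [← Finset.sum_add_distrib]
      exact Finset.sum_congr rfl fun a _ => by ring]
    rw [contractR v _ c, contractR v _ f]
    rw [Finset.sum_eq_zero (fun A _ => by rw [hv A, mul_zero]), zero_add]
    exact Finset.sum_congr rfl fun i _ => by ring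
  -- ## linearity in each slot
  have hlinR : ∀ (u v : Fin d → ℝ) A, (∀ B, ∑ b, c B b * v b = 0) →
      (∑ μ, ∑ ν, u μ * K A μ ν * v ν)
        = ∑ i, (∑ a, f i a * v a) * (∑ μ, ∑ ν, u μ * K A μ ν * e i ν) := by
    intro u v A hv
    calc ∑ μ, ∑ ν, u μ * K A μ ν * v ν
        = ∑ μ, ∑ ν, (u μ * K A μ ν) * ∑ i, (∑ a, f i a * v a) * e i ν := by
          refine Finset.sum_congr rfl fun μ _ => Finset.sum_congr rfl fun ν _ => ?_
          rw [← hvdec v hv ν]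
      _ = ∑ i, (∑ a, f i a * v a) * ∑ μ, ∑ ν, u μ * K A μ ν * e i ν :=
          swapin _ _ _
  have hlinL : ∀ (v w : Fin d → ℝ) A, (∀ B, ∑ b, c B b * v b = 0) →
      (∑ μ, ∑ ν, v μ * K A μ ν * w ν)
        = ∑ k, (∑ a, f k a * v a) * (∑ μ, ∑ ν, e k μ * K A μ ν * w ν) := by
    intro v w A hv
    calc ∑ μ, ∑ ν, v μ * K A μ ν * w ν
        = ∑ μ, (∑ k, (∑ a, f k a * v a) * e k μ) * (∑ ν, K A μ ν * w ν) := by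
          refine Finset.sum_congr rfl fun μ _ => ?_
          rw [← hvdec v hv μ, Finset.mul_sum]
          exact Finset.sum_congr rfl fun ν _ => (mul_assoc _ _ _)
      _ = ∑ k, (∑ a, f k a * v a) * ∑ μ, e k μ * (∑ ν, K A μ ν * w ν) :=
          contractR _ _ _
      _ = ∑ k, (∑ a, f k a * v a) * (∑ μ, ∑ ν, e k μ * K A μ ν * w ν) := by
          refine Finset.sum_congr rfl fun k _ => ?_
          congr 1
          refine Finset.sum_congr rfl fun μ _ => ?_
          rw [Finset.mul_sum]
          exact Finset.sum_congr rfl fun ν _ => (mul_assoc _ _ _).symm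
  -- contraction of a row of K with e j
  have hcY : ∀ (u : Fin d → ℝ) A j, (∑ x, u x * ∑ e₀, K A x e₀ * e j e₀)
      = ∑ μ, ∑ ν, u μ * K A μ ν * e j ν := by
    intro u A j
    refine Finset.sum_congr rfl fun μ _ => ?_
    rw [Finset.mul_sum]
    exact Finset.sum_congr rfl fun ν _ => (mul_assoc _ _ _).symm
  -- contraction of h with f j
  have hfh : ∀ j e₀, ∑ a, f j a * (∑ i, e i a * e i e₀) = e j e₀ := by
    intro j e₀
    have h1 : ∀ a, (∑ i, e i a * e i e₀) = ∑ i, (e i e₀) * e i a :=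
      fun a => Finset.sum_congr rfl fun i _ => mul_comm _ _
    simp only [h1]
    rw [contractL (f j) _ e]
    have h2 : ∀ i, (∑ a, e i a * f j a) = if j = i then (1:ℝ) else 0 :=
      fun i => by rw [show (∑ a, e i a * f j a) = ∑ a, f j a * e i a from
        Finset.sum_congr rfl fun a _ => mul_comm _ _, hfe j i]
    simp only [h2]
    simp [mul_ite, Finset.sum_ite_eq]
  -- ## Step A : remove the h-contraction
  have hstepA : (∀ a b c₀, (1/2 : ℝ) * ∑ A, ∑ e₀,
        (c A b * K A c₀ e₀ + c A c₀ * K A b e₀) * (∑ i, e i a * e i e₀) = 0)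
      ↔ (∀ j b c₀, ∑ A, ∑ e₀,
        (c A b * K A c₀ e₀ + c A c₀ * K A b e₀) * e j e₀ = 0) := by
    constructor
    · intro h j b c₀
      have hS : ∀ a, ∑ A, ∑ e₀,
          (c A b * K A c₀ e₀ + c A c₀ * K A b e₀) * (∑ i, e i a * e i e₀) = 0 := by
        intro a
        have := h a b c₀
        linarith
      calc ∑ A, ∑ e₀, (c A b * K A c₀ e₀ + c A c₀ * K A b e₀) * e j e₀
          = ∑ A, ∑ e₀, (c A b * K A c₀ e₀ + c A c₀ * K A b e₀)
              * ∑ a, f j a * (∑ i, e i a * e i e₀) := by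
            simp_rw [hfh]
        _ = ∑ a, f j a * ∑ A, ∑ e₀,
              (c A b * K A c₀ e₀ + c A c₀ * K A b e₀) * (∑ i, e i a * e i e₀) :=
            (contractL2 _ _ _).symm
        _ = 0 := by simp_rw [hS]; simp
    · intro h a b c₀
      have : ∑ A, ∑ e₀, (c A b * K A c₀ e₀ + c A c₀ * K A b e₀) * (∑ i, e i a * e i e₀)
          = ∑ i, e i a * ∑ A, ∑ e₀, (c A b * K A c₀ e₀ + c A c₀ * K A b e₀) * e i e₀ :=
        swapin _ _ _
      rw [this]
      simp_rw [h]
      simp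
  -- ## Step B : basis form of the kernel conditions, for fixed j
  have hstepB : ∀ j : Fin q, (∀ b c₀, ∑ A, ∑ e₀,
        (c A b * K A c₀ e₀ + c A c₀ * K A b e₀) * e j e₀ = 0)
      ↔ ((∀ B C, (∑ μ, ∑ ν, t C μ * K B μ ν * e j ν)
            + (∑ μ, ∑ ν, t B μ * K C μ ν * e j ν) = 0)
        ∧ (∀ B k, (∑ μ, ∑ ν, e k μ * K B μ ν * e j ν) = 0)) := by
    intro j
    have hQY : ∀ b c₀, (∑ A, ∑ e₀, (c A b * K A c₀ e₀ + c A c₀ * K A b e₀) * e j e₀)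
        = ∑ A, (c A b * (∑ e₀, K A c₀ e₀ * e j e₀)
            + c A c₀ * (∑ e₀, K A b e₀ * e j e₀)) := by
      intro b c₀
      refine Finset.sum_congr rfl fun A _ => ?_
      rw [Finset.mul_sum, Finset.mul_sum, ← Finset.sum_add_distrib]
      exact Finset.sum_congr rfl fun e₀ _ => by ring
    constructor
    · intro h
      -- the t_B contraction of Q vanishes
      have hbt : ∀ (B : Fin (p+1)) c₀, (∑ e₀, K B c₀ e₀ * e j e₀)
          + ∑ A, c A c₀ * (∑ μ, ∑ ν, t B μ * K A μ ν * e j ν) = 0 := by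
        intro B c₀
        have h0 : ∑ b, t B b * ∑ A, (c A b * (∑ e₀, K A c₀ e₀ * e j e₀)
            + c A c₀ * (∑ e₀, K A b e₀ * e j e₀)) = 0 := by
          simp_rw [← hQY, h]
          simp
        rw [show (∑ b, t B b * ∑ A, (c A b * (∑ e₀, K A c₀ e₀ * e j e₀)
              + c A c₀ * (∑ e₀, K A b e₀ * e j e₀)))
            = (∑ b, t B b * ∑ A, (∑ e₀, K A c₀ e₀ * e j e₀) * c A b)
              + ∑ b, t B b * ∑ A, c A c₀ * (∑ e₀, K A b e₀ * e j e₀) from by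
          rw [← Finset.sum_add_distrib]
          refine Finset.sum_congr rfl fun b _ => ?_
          rw [← mul_add, ← Finset.sum_add_distrib]
          refine congrArg _ (Finset.sum_congr rfl fun A _ => by ring)] at h0
        rw [contractL (t B) _ c,
          contractL (t B) (fun A => c A c₀)
            (fun A b => ∑ e₀, K A b e₀ * e j e₀)] at h0
        simp_rw [hct] at h0
        simp only [mul_ite, mul_one, mul_zero, Finset.sum_ite_eq', Finset.mem_univ,
          if_true] at h0
        have h2 : ∀ A : Fin (p+1), (∑ b, (∑ e₀, K A b e₀ * e j e₀) * t B b)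
            = ∑ μ, ∑ ν, t B μ * K A μ ν * e j ν := by
          intro A
          rw [← hcY (t B) A j]
          exact Finset.sum_congr rfl fun b _ => mul_comm _ _
        simp_rw [h2] at h0
        exact h0
      constructor
      · intro B C
        have h0 : ∑ c₀, t C c₀ * ((∑ e₀, K B c₀ e₀ * e j e₀)
            + ∑ A, c A c₀ * (∑ μ, ∑ ν, t B μ * K A μ ν * e j ν)) = 0 := by
          simp_rw [hbt]
          simp
        simp only [mul_add, Finset.sum_add_distrib] at h0
        rw [hcY (t C) B j] at h0
        rw [show (∑ c₀, t C c₀ * ∑ A, c A c₀ * (∑ μ, ∑ ν, t B μ * K A μ ν * e j ν))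
            = ∑ c₀, t C c₀ * ∑ A, (∑ μ, ∑ ν, t B μ * K A μ ν * e j ν) * c A c₀ from
          Finset.sum_congr rfl fun c₀ _ => congrArg _
            (Finset.sum_congr rfl fun A _ => by ring)] at h0
        rw [contractL (t C) _ c] at h0
        simp_rw [hct] at h0
        simp only [mul_ite, mul_one, mul_zero, Finset.sum_ite_eq', Finset.mem_univ,
          if_true] at h0
        exact h0
      · intro B k
        have h0 : ∑ c₀, e k c₀ * ((∑ e₀, K B c₀ e₀ * e j e₀)
            + ∑ A, c A c₀ * (∑ μ, ∑ ν, t B μ * K A μ ν * e j ν)) = 0 := by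
          simp_rw [hbt]
          simp
        simp only [mul_add, Finset.sum_add_distrib] at h0
        rw [hcY (e k) B j] at h0
        rw [show (∑ c₀, e k c₀ * ∑ A, c A c₀ * (∑ μ, ∑ ν, t B μ * K A μ ν * e j ν))
            = ∑ c₀, e k c₀ * ∑ A, (∑ μ, ∑ ν, t B μ * K A μ ν * e j ν) * c A c₀ from
          Finset.sum_congr rfl fun c₀ _ => congrArg _
            (Finset.sum_congr rfl fun A _ => by ring)] at h0
        rw [contractL (e k) _ c] at h0
        simp_rw [hce] at h0
        simpa using h0
    · rintro ⟨hi, hii⟩ b c₀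
      have hYdec : ∀ (A : Fin (p+1)) (x : Fin d), (∑ e₀, K A x e₀ * e j e₀)
          = ∑ B, c B x * (∑ μ, ∑ ν, t B μ * K A μ ν * e j ν) := by
        intro A x
        have h1 : (∑ e₀, K A x e₀ * e j e₀)
            = ∑ μ, (if μ = x then (1:ℝ) else 0) * (∑ e₀, K A μ e₀ * e j e₀) := by
          simp [ite_mul]
        rw [h1]
        simp_rw [← hcomp]
        rw [show (∑ μ, ((∑ B, t B μ * c B x) + ∑ i, e i μ * f i x)
              * (∑ e₀, K A μ e₀ * e j e₀))
            = (∑ μ, (∑ B, (c B x) * t B μ) * (∑ e₀, K A μ e₀ * e j e₀))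
              + ∑ μ, (∑ i, (f i x) * e i μ) * (∑ e₀, K A μ e₀ * e j e₀) from by
          rw [← Finset.sum_add_distrib]
          refine Finset.sum_congr rfl fun μ _ => ?_
          rw [← add_mul]
          refine congrArg (· * _) ?_
          refine congrArg₂ (· + ·) ?_ ?_ <;>
            exact Finset.sum_congr rfl fun _ _ => by ring]
        rw [contractR _ (fun B => c B x) t, contractR _ (fun i => f i x) e]
        simp_rw [hcY]
        rw [show (∑ i, f i x * ∑ μ, ∑ ν, e i μ * K A μ ν * e j ν) = 0 from
          Finset.sum_eq_zero fun i _ => by rw [hii A i, mul_zero], add_zero]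
      rw [hQY b c₀]
      simp_rw [hYdec]
      have hsplit : ∑ A, (c A b * ∑ B, c B c₀ * (∑ μ, ∑ ν, t B μ * K A μ ν * e j ν)
            + c A c₀ * ∑ B, c B b * (∑ μ, ∑ ν, t B μ * K A μ ν * e j ν))
          = ∑ A, ∑ B, (c A b * c B c₀ *
              ((∑ μ, ∑ ν, t B μ * K A μ ν * e j ν)
                + (∑ μ, ∑ ν, t A μ * K B μ ν * e j ν))) := by
        have hswap : (∑ A, ∑ B, c A c₀ * c B b * (∑ μ, ∑ ν, t B μ * K A μ ν * e j ν))
            = ∑ A, ∑ B, c A b * c B c₀ * (∑ μ, ∑ ν, t A μ * K B μ ν * e j ν) := by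
          rw [Finset.sum_comm]
          exact Finset.sum_congr rfl fun A _ =>
            Finset.sum_congr rfl fun B _ => by ring
        calc ∑ A, (c A b * ∑ B, c B c₀ * (∑ μ, ∑ ν, t B μ * K A μ ν * e j ν)
              + c A c₀ * ∑ B, c B b * (∑ μ, ∑ ν, t B μ * K A μ ν * e j ν))
            = (∑ A, ∑ B, c A b * c B c₀ * (∑ μ, ∑ ν, t B μ * K A μ ν * e j ν))
              + ∑ A, ∑ B, c A c₀ * c B b * (∑ μ, ∑ ν, t B μ * K A μ ν * e j ν) := by
              rw [← Finset.sum_add_distrib]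
              refine Finset.sum_congr rfl fun A _ => ?_
              rw [Finset.mul_sum, Finset.mul_sum]
              refine congrArg₂ (· + ·) ?_ ?_ <;>
                exact Finset.sum_congr rfl fun B _ => by ring
          _ = (∑ A, ∑ B, c A b * c B c₀ * (∑ μ, ∑ ν, t B μ * K A μ ν * e j ν))
              + ∑ A, ∑ B, c A b * c B c₀ * (∑ μ, ∑ ν, t A μ * K B μ ν * e j ν) := by
              rw [hswap]
          _ = ∑ A, ∑ B, (c A b * c B c₀ *
              ((∑ μ, ∑ ν, t B μ * K A μ ν * e j ν)
                + (∑ μ, ∑ ν, t A μ * K B μ ν * e j ν))) := by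
              rw [← Finset.sum_add_distrib]
              refine Finset.sum_congr rfl fun A _ => ?_
              rw [← Finset.sum_add_distrib]
              exact Finset.sum_congr rfl fun B _ => by ring
      rw [hsplit]
      refine Finset.sum_eq_zero fun A _ => Finset.sum_eq_zero fun B _ => ?_
      rw [hi A B, mul_zero]
  -- ## assembly
  rw [hstepA]
  constructor
  · intro h
    constructor
    · intro A B v hv
      have hv' := (htrans v).1 hv
      rw [hlinR (t B) v A hv', hlinR (t A) v B hv']
      refine eq_neg_of_add_eq_zero_left ?_
      rw [← Finset.sum_add_distrib]
      refine Finset.sum_eq_zero fun i _ => ?_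
      rw [← mul_add, ((hstepB i).1 (h i)).1 A B, mul_zero]
    · intro A v w hv hw
      have hv' := (htrans v).1 hv
      have hw' := (htrans w).1 hw
      rw [hlinL v w A hv']
      refine Finset.sum_eq_zero fun k _ => ?_
      rw [hlinR (e k) w A hw']
      have hz : (∑ i, (∑ a, f i a * w a) * ∑ μ, ∑ ν, e k μ * K A μ ν * e i ν) = 0 :=
        Finset.sum_eq_zero fun i _ => by
          rw [((hstepB i).1 (h i)).2 A k, mul_zero]
      rw [hz, mul_zero]
  · rintro ⟨h1, h2⟩ j
    refine (hstepB j).2 ⟨fun B C => ?_, fun B k => ?_⟩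
    · have := h1 B C (e j) (hetrans j)
      linarith
    · exact h2 B (e k) (e j) (hetrans k) (hetrans j)
end
end

section
/- The map φ̄ from the quotient ⊕_{p+1}Ω²(M)/Ker(φ) to 𝔙(M,τ,h), induced by F_A ↦ τ^A_{(b} F_{|A|c)d} h^{ad}, is a linear isomorphism, with inverse S^a_{bc} ↦ [2 ĥ_{c[b} S^c_{a]d} τ^d_A]. -/
noncomputable section

/-- `τ_{ab} = η_{AB} c^A_a c^B_b`. -/
def tauM (d p : ℕ) (c : Fin (p+1) → Fin d → ℝ) (a b : Fin d) : ℝ :=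
  ∑ A, ∑ B, eta' p A B * c A a * c B b

/-- `h^{ab} = δ^{ij} e_i^a e_j^b`. -/
def hM (d q : ℕ) (e : Fin q → Fin d → ℝ) (a b : Fin d) : ℝ :=
  ∑ i, e i a * e i b

/-- `ĥ_{ab} = δ_{ij} f^i_a f^j_b`. -/
def hhatM (d q : ℕ) (f : Fin q → Fin d → ℝ) (a b : Fin d) : ℝ :=
  ∑ i, f i a * f i b

/-- `φ(F)^a_{bc} = τ^A_{(b} F_{|A|c)d} h^{ad}`. -/
def phiMap (d p q : ℕ) (c : Fin (p+1) → Fin d → ℝ) (e : Fin q → Fin d → ℝ)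
    (F : Fin (p+1) → Matrix (Fin d) (Fin d) ℝ) (a b c₀ : Fin d) : ℝ :=
  (1/2 : ℝ) * ∑ A, ∑ e₀, (c A b * F A c₀ e₀ + c A c₀ * F A b e₀) * hM d q e a e₀

/-- `ψ(S)_{Aab} = 2 ĥ_{c[b} S^c_{a]d} τ^d_A`. -/
def psiMap (d p q : ℕ) (t : Fin (p+1) → Fin d → ℝ) (f : Fin q → Fin d → ℝ)
    (S : Fin d → Fin d → Fin d → ℝ) (A : Fin (p+1)) (a b : Fin d) : ℝ :=
  ∑ c₀, ∑ e₀, (hhatM d q f c₀ b * S c₀ a e₀ - hhatM d q f c₀ a * S c₀ b e₀) * t A e₀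

/-- Pointwise membership in `𝔙(M,τ,h)`. -/
def InV0 (d p q : ℕ) (c : Fin (p+1) → Fin d → ℝ) (e : Fin q → Fin d → ℝ)
    (S : Fin d → Fin d → Fin d → ℝ) : Prop :=
  (∀ a b c₀, S a b c₀ = S a c₀ b) ∧
  (∀ a b c₀, ∑ e₀, (S e₀ a b * tauM d p c c₀ e₀ + S e₀ a c₀ * tauM d p c b e₀) = 0) ∧
  (∀ a b c₀, ∑ e₀, (hM d q e e₀ c₀ * S b a e₀ + hM d q e e₀ b * S c₀ a e₀) = 0)

/-- Membership in `Ker φ` (cf. Proposition 6). -/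
def InKerPhi (d p q : ℕ) (t c : Fin (p+1) → Fin d → ℝ)
    (K : Fin (p+1) → Matrix (Fin d) (Fin d) ℝ) : Prop :=
  (∀ A B (v : Fin d → ℝ), (∀ a, ∑ b, tauM d p c a b * v b = 0) →
    (∑ μ, ∑ ν, t B μ * K A μ ν * v ν) = -(∑ μ, ∑ ν, t A μ * K B μ ν * v ν)) ∧
  (∀ A (v w : Fin d → ℝ), (∀ a, ∑ b, tauM d p c a b * v b = 0) →
    (∀ a, ∑ b, tauM d p c a b * w b = 0) →
    (∑ μ, ∑ ν, v μ * K A μ ν * w ν) = 0)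

-- generic sum toolkit
lemma sum_mul_swap {ι κ : Type*} [Fintype ι] [Fintype κ] (r : ι → ℝ) (s : κ → ℝ)
    (X : ι → κ → ℝ) :
    ∑ a, r a * ∑ b, s b * X a b = ∑ b, s b * ∑ a, r a * X a b := by
  simp only [Finset.mul_sum]
  rw [Finset.sum_comm]
  exact Finset.sum_congr rfl fun b _ => Finset.sum_congr rfl fun a _ => by ring

lemma sum_delta_mul {n : ℕ} (x : Fin n) (g : Fin n → ℝ) :
    ∑ a, (if x = a then (1:ℝ) else 0) * g a = g x := by
  simp [ite_mul]

lemma sum_delta_mul' {n : ℕ} (x : Fin n) (g : Fin n → ℝ) :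
    ∑ a, (if a = x then (1:ℝ) else 0) * g a = g x := by
  simp [ite_mul]

section Frames
variable {d p q : ℕ} (t : Fin (p+1) → Fin d → ℝ) (e : Fin q → Fin d → ℝ)
  (c : Fin (p+1) → Fin d → ℝ) (f : Fin q → Fin d → ℝ)

def vU : Sum (Fin (p+1)) (Fin q) → Fin d → ℝ := Sum.elim t e
def cU : Sum (Fin (p+1)) (Fin q) → Fin d → ℝ := Sum.elim c f

lemma hdualU (hct : ∀ A B, ∑ a, c A a * t B a = if A = B then (1:ℝ) else 0)
    (hce : ∀ A i, ∑ a, c A a * e i a = 0)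
    (hft : ∀ i A, ∑ a, f i a * t A a = 0)
    (hfe : ∀ i j, ∑ a, f i a * e j a = if i = j then (1:ℝ) else 0)
    (α β : Sum (Fin (p+1)) (Fin q)) :
    ∑ a, cU c f α a * vU t e β a = if α = β then (1:ℝ) else 0 := by
  cases α <;> cases β <;>
    simp [cU, vU, hct, hce, hft, hfe, Sum.inl.injEq, Sum.inr.injEq]

lemma hcompU (hcomp : ∀ a b, ((∑ A, t A a * c A b) + ∑ i, e i a * f i b)
      = if a = b then (1:ℝ) else 0) (x y : Fin d) :
    ∑ α, vU t e α x * cU c f α y = if x = y then (1:ℝ) else 0 := by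
  rw [Fintype.sum_sum_type]
  simpa [vU, cU] using hcomp x y

lemma resolve_up (hcomp : ∀ a b, ((∑ A, t A a * c A b) + ∑ i, e i a * f i b)
      = if a = b then (1:ℝ) else 0) (g : Fin d → ℝ) (x : Fin d) :
    ∑ α, vU t e α x * ∑ a, cU c f α a * g a = g x := by
  have h : ∑ α, vU t e α x * ∑ a, cU c f α a * g a
      = ∑ a, (∑ α, vU t e α x * cU c f α a) * g a := by
    simp only [Finset.mul_sum, Finset.sum_mul]
    rw [Finset.sum_comm]
    exact Finset.sum_congr rfl fun a _ => Finset.sum_congr rfl fun α _ => by ring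
  rw [h]
  simp only [hcompU t e c f hcomp]
  exact sum_delta_mul x g

lemma resolve_dn (hcomp : ∀ a b, ((∑ A, t A a * c A b) + ∑ i, e i a * f i b)
      = if a = b then (1:ℝ) else 0) (g : Fin d → ℝ) (y : Fin d) :
    ∑ β, cU c f β y * ∑ b, vU t e β b * g b = g y := by
  have h : ∑ β, cU c f β y * ∑ b, vU t e β b * g b
      = ∑ b, (∑ β, vU t e β b * cU c f β y) * g b := by
    simp only [Finset.mul_sum, Finset.sum_mul]
    rw [Finset.sum_comm]
    exact Finset.sum_congr rfl fun a _ => Finset.sum_congr rfl fun α _ => by ring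
  rw [h]
  simp only [hcompU t e c f hcomp]
  exact sum_delta_mul' y g

/-- components of a (1,2)-tensor in the frame basis -/
def cpt (T : Fin d → Fin d → Fin d → ℝ) (α β γ : Sum (Fin (p+1)) (Fin q)) : ℝ :=
  ∑ a, cU c f α a * ∑ b, vU t e β b * ∑ c₀, vU t e γ c₀ * T a b c₀

lemma recon (hcomp : ∀ a b, ((∑ A, t A a * c A b) + ∑ i, e i a * f i b)
      = if a = b then (1:ℝ) else 0) (T : Fin d → Fin d → Fin d → ℝ) (x y z : Fin d) :
    T x y z = ∑ α, vU t e α x * ∑ β, cU c f β y * ∑ γ, cU c f γ z *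
      cpt t e c f T α β γ := by
  calc T x y z
      = ∑ α, vU t e α x * ∑ a, cU c f α a * T a y z :=
        (resolve_up t e c f hcomp (fun a => T a y z) x).symm
    _ = ∑ α, vU t e α x * ∑ a, cU c f α a *
          (∑ β, cU c f β y * ∑ b, vU t e β b * T a b z) := by
        refine Finset.sum_congr rfl fun α _ => ?_
        congr 1
        refine Finset.sum_congr rfl fun a _ => ?_
        rw [resolve_dn t e c f hcomp (fun b => T a b z) y]
    _ = ∑ α, vU t e α x * ∑ a, cU c f α a *
          (∑ β, cU c f β y * ∑ b, vU t e β b *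
            (∑ γ, cU c f γ z * ∑ c₀, vU t e γ c₀ * T a b c₀)) := by
        refine Finset.sum_congr rfl fun α _ => ?_
        congr 1
        refine Finset.sum_congr rfl fun a _ => ?_
        congr 1
        refine Finset.sum_congr rfl fun β _ => ?_
        congr 1
        refine Finset.sum_congr rfl fun b _ => ?_
        rw [resolve_dn t e c f hcomp (fun c₀ => T a b c₀) z]
    _ = ∑ α, vU t e α x * ∑ β, cU c f β y * ∑ a, cU c f α a *
          (∑ b, vU t e β b *
            (∑ γ, cU c f γ z * ∑ c₀, vU t e γ c₀ * T a b c₀)) := by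
        refine Finset.sum_congr rfl fun α _ => ?_
        congr 1
        exact sum_mul_swap _ _ _
    _ = ∑ α, vU t e α x * ∑ β, cU c f β y * ∑ a, cU c f α a *
          (∑ γ, cU c f γ z *
            ∑ b, vU t e β b * ∑ c₀, vU t e γ c₀ * T a b c₀) := by
        refine Finset.sum_congr rfl fun α _ => ?_
        congr 1
        refine Finset.sum_congr rfl fun β _ => ?_
        congr 1
        refine Finset.sum_congr rfl fun a _ => ?_
        congr 1
        exact sum_mul_swap _ _ _
    _ = ∑ α, vU t e α x * ∑ β, cU c f β y * ∑ γ, cU c f γ z *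
          ∑ a, cU c f α a *
            ∑ b, vU t e β b * ∑ c₀, vU t e γ c₀ * T a b c₀ := by
        refine Finset.sum_congr rfl fun α _ => ?_
        congr 1
        refine Finset.sum_congr rfl fun β _ => ?_
        congr 1
        exact sum_mul_swap _ _ _
    _ = ∑ α, vU t e α x * ∑ β, cU c f β y * ∑ γ, cU c f γ z *
          cpt t e c f T α β γ := rfl

lemma tensor_ext (hcomp : ∀ a b, ((∑ A, t A a * c A b) + ∑ i, e i a * f i b)
      = if a = b then (1:ℝ) else 0) (T T' : Fin d → Fin d → Fin d → ℝ)
    (h : ∀ α β γ, cpt t e c f T α β γ = cpt t e c f T' α β γ) : T = T' := by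
  funext x y z
  rw [recon t e c f hcomp T x y z, recon t e c f hcomp T' x y z]
  simp only [h]
end Frames

section Work
variable {d p q : ℕ} (t : Fin (p+1) → Fin d → ℝ) (e : Fin q → Fin d → ℝ)
  (c : Fin (p+1) → Fin d → ℝ) (f : Fin q → Fin d → ℝ)

-- bilinear pairing of a matrix
def bil (M : Matrix (Fin d) (Fin d) ℝ) (u v : Fin d → ℝ) : ℝ :=
  ∑ μ, ∑ ν, u μ * M μ ν * v ν

lemma c_hM (hce : ∀ A i, ∑ a, c A a * e i a = 0) (A : Fin (p+1)) (x : Fin d) :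
    ∑ a, c A a * hM d q e a x = 0 := by
  unfold hM
  simp only [Finset.mul_sum]
  rw [Finset.sum_comm]
  have : ∀ i, ∑ a, c A a * (e i a * e i x) = 0 := by
    intro i
    have : ∑ a, c A a * (e i a * e i x) = (∑ a, c A a * e i a) * e i x := by
      rw [Finset.sum_mul]
      exact Finset.sum_congr rfl fun a _ => by ring
    rw [this, hce A i, zero_mul]
  simp [this]

lemma f_hM (hfe : ∀ i j, ∑ a, f i a * e j a = if i = j then (1:ℝ) else 0)
    (k : Fin q) (x : Fin d) :
    ∑ a, f k a * hM d q e a x = e k x := by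
  unfold hM
  simp only [Finset.mul_sum]
  rw [Finset.sum_comm]
  have : ∀ i, ∑ a, f k a * (e i a * e i x) = (if k = i then (1:ℝ) else 0) * e i x := by
    intro i
    have h : ∑ a, f k a * (e i a * e i x) = (∑ a, f k a * e i a) * e i x := by
      rw [Finset.sum_mul]
      exact Finset.sum_congr rfl fun a _ => by ring
    rw [h, hfe k i]
  simp only [this, ite_mul, one_mul, zero_mul]
  simp

lemma sum_del {g : Fin (p+1) → ℝ} (β : Sum (Fin (p+1)) (Fin q)) :
    ∑ A, (if Sum.inl A = β then (1:ℝ) else 0) * g A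
      = Sum.elim g (fun _ => 0) β := by
  cases β with
  | inl B => simp
  | inr j => simp


lemma pull2 {ι κ₁ κ₂ : Type*} [Fintype ι] [Fintype κ₁] [Fintype κ₂]
    (w : ι → ℝ) (r : ℝ) (G : κ₁ → κ₂ → ℝ) (H : ι → κ₂ → ℝ) :
    ∑ a, w a * (r * ∑ A, ∑ x, G A x * H a x)
      = r * ∑ A, ∑ x, G A x * ∑ a, w a * H a x := by
  simp only [Finset.mul_sum]
  rw [Finset.sum_comm]
  refine Finset.sum_congr rfl fun A _ => ?_
  rw [Finset.sum_comm]
  exact Finset.sum_congr rfl fun x _ => Finset.sum_congr rfl fun a _ => by ring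

lemma cpt_reorder (T : Fin d → Fin d → Fin d → ℝ) (α β γ : Sum (Fin (p+1)) (Fin q)) :
    cpt t e c f T α β γ
      = ∑ b, vU t e β b * ∑ c₀, vU t e γ c₀ * ∑ a, cU c f α a * T a b c₀ := by
  unfold cpt
  rw [sum_mul_swap]
  refine Finset.sum_congr rfl fun b _ => ?_
  congr 1
  exact sum_mul_swap _ _ _

lemma phi_contract_c (hce : ∀ A i, ∑ a, c A a * e i a = 0)
    (F : Fin (p+1) → Matrix (Fin d) (Fin d) ℝ) (A : Fin (p+1)) (b c₀ : Fin d) :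
    ∑ a, c A a * phiMap d p q c e F a b c₀ = 0 := by
  unfold phiMap
  rw [pull2]
  have : ∀ B x, (c B b * F B c₀ x + c B c₀ * F B b x) * ∑ a, c A a * hM d q e a x = 0 := by
    intro B x
    rw [c_hM e c hce A x, mul_zero]
  simp [this]

lemma phi_contract_f (hfe : ∀ i j, ∑ a, f i a * e j a = if i = j then (1:ℝ) else 0)
    (F : Fin (p+1) → Matrix (Fin d) (Fin d) ℝ) (k : Fin q) (b c₀ : Fin d) :
    ∑ a, f k a * phiMap d p q c e F a b c₀
      = (1/2) * ∑ A, ∑ x, (c A b * F A c₀ x + c A c₀ * F A b x) * e k x := by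
  unfold phiMap
  rw [pull2]
  congr 1
  refine Finset.sum_congr rfl fun A _ => Finset.sum_congr rfl fun x _ => ?_
  rw [f_hM e f hfe k x]

lemma cpt_phi_inl (hce : ∀ A i, ∑ a, c A a * e i a = 0)
    (F : Fin (p+1) → Matrix (Fin d) (Fin d) ℝ) (A : Fin (p+1))
    (β γ : Sum (Fin (p+1)) (Fin q)) :
    cpt t e c f (phiMap d p q c e F) (Sum.inl A) β γ = 0 := by
  rw [cpt_reorder]
  have : ∀ b c₀, ∑ a, cU c f (Sum.inl A) a * phiMap d p q c e F a b c₀ = 0 := by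
    intro b c₀
    exact phi_contract_c e c hce F A b c₀
  simp [this]


lemma reorder4a {ι₁ ι₂ ι₃ ι₄ : Type*} [Fintype ι₁] [Fintype ι₂] [Fintype ι₃] [Fintype ι₄]
    (g : ι₁ → ι₂ → ι₃ → ι₄ → ℝ) :
    ∑ b, ∑ c₀, ∑ A, ∑ x, g b c₀ A x = ∑ A, ∑ b, ∑ c₀, ∑ x, g b c₀ A x := by
  calc ∑ b, ∑ c₀, ∑ A, ∑ x, g b c₀ A x
      = ∑ b, ∑ A, ∑ c₀, ∑ x, g b c₀ A x :=
        Finset.sum_congr rfl fun b _ => Finset.sum_comm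
    _ = ∑ A, ∑ b, ∑ c₀, ∑ x, g b c₀ A x := Finset.sum_comm

lemma reorder4b {ι₁ ι₂ ι₃ ι₄ : Type*} [Fintype ι₁] [Fintype ι₂] [Fintype ι₃] [Fintype ι₄]
    (g : ι₁ → ι₂ → ι₃ → ι₄ → ℝ) :
    ∑ b, ∑ c₀, ∑ A, ∑ x, g b c₀ A x = ∑ A, ∑ c₀, ∑ b, ∑ x, g b c₀ A x := by
  rw [reorder4a]
  exact Finset.sum_congr rfl fun A _ => Finset.sum_comm

lemma cpt_phi_inr
    (hct : ∀ A B, ∑ a, c A a * t B a = if A = B then (1:ℝ) else 0)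
    (hce : ∀ A i, ∑ a, c A a * e i a = 0)
    (hft : ∀ i A, ∑ a, f i a * t A a = 0)
    (hfe : ∀ i j, ∑ a, f i a * e j a = if i = j then (1:ℝ) else 0)
    (F : Fin (p+1) → Matrix (Fin d) (Fin d) ℝ) (k : Fin q)
    (β γ : Sum (Fin (p+1)) (Fin q)) :
    cpt t e c f (phiMap d p q c e F) (Sum.inr k) β γ
      = (1/2) * (Sum.elim (fun B => bil (F B) (vU t e γ) (e k)) (fun _ => 0) β
               + Sum.elim (fun C => bil (F C) (vU t e β) (e k)) (fun _ => 0) γ) := by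
  rw [cpt_reorder]
  have hc : ∀ b c₀, ∑ a, cU c f (Sum.inr k) a * phiMap d p q c e F a b c₀
      = (1/2) * ∑ A, ∑ x, (c A b * F A c₀ x + c A c₀ * F A b x) * e k x := by
    intro b c₀
    exact phi_contract_f e c f hfe F k b c₀
  calc ∑ b, vU t e β b * ∑ c₀, vU t e γ c₀ * ∑ a, cU c f (Sum.inr k) a * phiMap d p q c e F a b c₀
      = ∑ b, ∑ c₀, ∑ A, ∑ x, (vU t e β b * (vU t e γ c₀ * ((1/2) *
          ((c A b * F A c₀ x + c A c₀ * F A b x) * e k x)))) := by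
        refine Finset.sum_congr rfl fun b _ => ?_
        rw [Finset.mul_sum]
        refine Finset.sum_congr rfl fun c₀ _ => ?_
        rw [hc b c₀]
        simp only [Finset.mul_sum]
    _ = (∑ b, ∑ c₀, ∑ A, ∑ x, (1/2) * ((c A b * vU t e β b) * (vU t e γ c₀ * F A c₀ x * e k x)))
      + (∑ b, ∑ c₀, ∑ A, ∑ x, (1/2) * ((c A c₀ * vU t e γ c₀) * (vU t e β b * F A b x * e k x))) := by
        rw [← Finset.sum_add_distrib]
        refine Finset.sum_congr rfl fun b _ => ?_
        rw [← Finset.sum_add_distrib]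
        refine Finset.sum_congr rfl fun c₀ _ => ?_
        rw [← Finset.sum_add_distrib]
        refine Finset.sum_congr rfl fun A _ => ?_
        rw [← Finset.sum_add_distrib]
        refine Finset.sum_congr rfl fun x _ => ?_
        ring
    _ = (∑ A, ∑ b, ∑ c₀, ∑ x, (1/2) * ((c A b * vU t e β b) * (vU t e γ c₀ * F A c₀ x * e k x)))
      + (∑ A, ∑ c₀, ∑ b, ∑ x, (1/2) * ((c A c₀ * vU t e γ c₀) * (vU t e β b * F A b x * e k x))) := by
        congr 1
        · exact reorder4a _
        · exact reorder4b _
    _ = (1/2) * ((∑ A, (if Sum.inl A = β then (1:ℝ) else 0) * bil (F A) (vU t e γ) (e k))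
               + (∑ A, (if Sum.inl A = γ then (1:ℝ) else 0) * bil (F A) (vU t e β) (e k))) := by
        rw [mul_add]
        congr 1
        · rw [Finset.mul_sum]
          refine Finset.sum_congr rfl fun A _ => ?_
          rw [← hdualU t e c f hct hce hft hfe (Sum.inl A) β]
          unfold bil
          simp only [Finset.mul_sum, Finset.sum_mul]
          rw [Finset.sum_comm]
          refine Finset.sum_congr rfl fun b _ => ?_
          rw [Finset.sum_comm]
          refine Finset.sum_congr rfl fun c₀ _ => Finset.sum_congr rfl fun x _ => ?_
          simp only [cU, Sum.elim_inl]
        · rw [Finset.mul_sum]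
          refine Finset.sum_congr rfl fun A _ => ?_
          rw [← hdualU t e c f hct hce hft hfe (Sum.inl A) γ]
          unfold bil
          simp only [Finset.mul_sum, Finset.sum_mul]
          rw [Finset.sum_comm]
          refine Finset.sum_congr rfl fun c₀ _ => ?_
          rw [Finset.sum_comm]
          refine Finset.sum_congr rfl fun b _ => Finset.sum_congr rfl fun x _ => ?_
          simp only [cU, Sum.elim_inl]
    _ = (1/2) * (Sum.elim (fun B => bil (F B) (vU t e γ) (e k)) (fun _ => 0) β
               + Sum.elim (fun C => bil (F C) (vU t e β) (e k)) (fun _ => 0) γ) := by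
        rw [sum_del, sum_del]


def eps (p : ℕ) (A : Fin (p+1)) : ℝ := if A = 0 then -1 else 1

lemma eps_ne_zero (A : Fin (p+1)) : eps p A ≠ 0 := by
  unfold eps; split <;> norm_num

lemma hM_symm (x y : Fin d) : hM d q e x y = hM d q e y x := by
  unfold hM
  exact Finset.sum_congr rfl fun i _ => by ring

lemma hhat_e (hfe : ∀ i j, ∑ a, f i a * e j a = if i = j then (1:ℝ) else 0)
    (k : Fin q) (c₀ : Fin d) :
    ∑ ν, hhatM d q f c₀ ν * e k ν = f k c₀ := by
  have h1 : ∑ ν, hhatM d q f c₀ ν * e k ν = ∑ ν, e k ν * ∑ i, f i c₀ * f i ν := by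
    refine Finset.sum_congr rfl fun ν _ => ?_
    unfold hhatM
    rw [mul_comm]
  rw [h1, sum_mul_swap]
  have h2 : ∀ i, ∑ ν, e k ν * f i ν = if i = k then (1:ℝ) else 0 := by
    intro i
    rw [← hfe i k]
    exact Finset.sum_congr rfl fun ν _ => by ring
  calc ∑ i, f i c₀ * ∑ ν, e k ν * f i ν
      = ∑ i, f i c₀ * (if i = k then (1:ℝ) else 0) := by
        refine Finset.sum_congr rfl fun i _ => ?_
        rw [h2]
    _ = f k c₀ := by simp

lemma hhat_t (hft : ∀ i A, ∑ a, f i a * t A a = 0) (A : Fin (p+1)) (c₀ : Fin d) :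
    ∑ ν, hhatM d q f c₀ ν * t A ν = 0 := by
  have h1 : ∑ ν, hhatM d q f c₀ ν * t A ν = ∑ ν, t A ν * ∑ i, f i c₀ * f i ν := by
    refine Finset.sum_congr rfl fun ν _ => ?_
    unfold hhatM
    rw [mul_comm]
  rw [h1, sum_mul_swap]
  have h2 : ∀ i, ∑ ν, t A ν * f i ν = 0 := by
    intro i
    rw [← hft i A]
    exact Finset.sum_congr rfl fun ν _ => by ring
  simp [h2]

lemma tauM_eq (z y : Fin d) : tauM d p c z y = ∑ A, eps p A * c A z * c A y := by
  unfold tauM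
  refine Finset.sum_congr rfl fun A _ => ?_
  have : ∀ B, eta' p A B * c A z * c B y
      = (if A = B then eps p A * c A z * c B y else 0) := by
    intro B
    unfold eta' eps
    split <;> simp_all
  simp only [this]
  simp

lemma tauM_symm (z y : Fin d) : tauM d p c z y = tauM d p c y z := by
  rw [tauM_eq, tauM_eq]
  exact Finset.sum_congr rfl fun A _ => by ring

lemma tau_t (hct : ∀ A B, ∑ a, c A a * t B a = if A = B then (1:ℝ) else 0)
    (C : Fin (p+1)) (y : Fin d) :
    ∑ z, t C z * tauM d p c z y = eps p C * c C y := by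
  have h1 : ∑ z, t C z * tauM d p c z y
      = ∑ z, t C z * ∑ A, (eps p A * c A y) * c A z := by
    refine Finset.sum_congr rfl fun z _ => ?_
    rw [tauM_eq]
    congr 1
    exact Finset.sum_congr rfl fun A _ => by ring
  rw [h1, sum_mul_swap]
  have h2 : ∀ A, ∑ z, t C z * c A z = if A = C then (1:ℝ) else 0 := by
    intro A
    rw [← hct A C]
    exact Finset.sum_congr rfl fun z _ => by ring
  calc ∑ A, eps p A * c A y * ∑ z, t C z * c A z
      = ∑ A, eps p A * c A y * (if A = C then (1:ℝ) else 0) := by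
        refine Finset.sum_congr rfl fun A _ => ?_
        rw [h2]
    _ = eps p C * c C y := by simp

lemma tau_e (hce : ∀ A i, ∑ a, c A a * e i a = 0) (j : Fin q) (y : Fin d) :
    ∑ z, e j z * tauM d p c z y = 0 := by
  have h1 : ∑ z, e j z * tauM d p c z y
      = ∑ z, e j z * ∑ A, (eps p A * c A y) * c A z := by
    refine Finset.sum_congr rfl fun z _ => ?_
    rw [tauM_eq]
    congr 1
    exact Finset.sum_congr rfl fun A _ => by ring
  rw [h1, sum_mul_swap]
  have h2 : ∀ A, ∑ z, e j z * c A z = 0 := by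
    intro A
    rw [← hce A j]
    exact Finset.sum_congr rfl fun z _ => by ring
  simp [h2]

lemma tau_hM (hce : ∀ A i, ∑ a, c A a * e i a = 0) (y x : Fin d) :
    ∑ z, tauM d p c y z * hM d q e z x = 0 := by
  have h1 : ∑ z, tauM d p c y z * hM d q e z x
      = ∑ z, hM d q e z x * ∑ A, (eps p A * c A y) * c A z := by
    refine Finset.sum_congr rfl fun z _ => ?_
    rw [tauM_eq]
    rw [mul_comm]
  rw [h1, sum_mul_swap]
  have h2 : ∀ A, ∑ z, hM d q e z x * c A z = 0 := by
    intro A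
    rw [← c_hM e c hce A x]
    exact Finset.sum_congr rfl fun z _ => by ring
  simp [h2]


lemma phi_symm (F : Fin (p+1) → Matrix (Fin d) (Fin d) ℝ) (a b c₀ : Fin d) :
    phiMap d p q c e F a b c₀ = phiMap d p q c e F a c₀ b := by
  unfold phiMap
  congr 1
  refine Finset.sum_congr rfl fun A _ => Finset.sum_congr rfl fun x _ => by ring

lemma phi_tau (hce : ∀ A i, ∑ a, c A a * e i a = 0)
    (F : Fin (p+1) → Matrix (Fin d) (Fin d) ℝ) (y a b : Fin d) :
    ∑ e₀, phiMap d p q c e F e₀ a b * tauM d p c y e₀ = 0 := by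
  have h1 : ∑ e₀, phiMap d p q c e F e₀ a b * tauM d p c y e₀
      = ∑ e₀, tauM d p c y e₀ * phiMap d p q c e F e₀ a b :=
    Finset.sum_congr rfl fun e₀ _ => by ring
  rw [h1]
  unfold phiMap
  rw [pull2]
  have h2 : ∀ A x, (c A a * F A b x + c A b * F A a x) *
      ∑ e₀, tauM d p c y e₀ * hM d q e e₀ x = 0 := by
    intro A x
    rw [tau_hM e c hce y x, mul_zero]
  simp [h2]

lemma bil_antisym {M : Matrix (Fin d) (Fin d) ℝ} (hA : ∀ μ ν, M μ ν = -M ν μ)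
    (u v : Fin d → ℝ) : bil M u v + bil M v u = 0 := by
  unfold bil
  have h2 : ∑ μ, ∑ ν, v μ * M μ ν * u ν = ∑ μ, ∑ ν, v ν * M ν μ * u μ :=
    Finset.sum_comm
  rw [h2, ← Finset.sum_add_distrib]
  refine Finset.sum_eq_zero fun μ _ => ?_
  rw [← Finset.sum_add_distrib]
  refine Finset.sum_eq_zero fun ν _ => ?_
  rw [hA μ ν]
  ring

lemma hM_phi (hce : ∀ A i, ∑ a, c A a * e i a = 0)
    (F : Fin (p+1) → Matrix (Fin d) (Fin d) ℝ) (y b a : Fin d) :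
    ∑ e₀, hM d q e y e₀ * phiMap d p q c e F b a e₀
      = (1/2) * ∑ A, c A a *
          bil (F A) (fun u => hM d q e y u) (fun v => hM d q e b v) := by
  have h1 : ∀ e₀, phiMap d p q c e F b a e₀
      = (1/2) * ∑ A, ∑ x, (c A a * F A e₀ x + c A e₀ * F A a x) * hM d q e b x := by
    intro e₀
    unfold phiMap
    rfl
  calc ∑ e₀, hM d q e y e₀ * phiMap d p q c e F b a e₀
      = ∑ e₀, ∑ A, ∑ x, (1/2) * (hM d q e y e₀ *
          ((c A a * F A e₀ x + c A e₀ * F A a x) * hM d q e b x)) := by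
        refine Finset.sum_congr rfl fun e₀ _ => ?_
        rw [h1 e₀]
        simp only [Finset.mul_sum]
        refine Finset.sum_congr rfl fun A _ => Finset.sum_congr rfl fun x _ => by ring
    _ = ∑ A, ∑ e₀, ∑ x, (1/2) * (hM d q e y e₀ *
          ((c A a * F A e₀ x + c A e₀ * F A a x) * hM d q e b x)) := Finset.sum_comm
    _ = ∑ A, ((1/2) * (c A a *
          ∑ e₀, ∑ x, hM d q e y e₀ * F A e₀ x * hM d q e b x)
        + (1/2) * ((∑ e₀, c A e₀ * hM d q e y e₀) *
          ∑ x, F A a x * hM d q e b x)) := by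
        refine Finset.sum_congr rfl fun A _ => ?_
        rw [Finset.sum_mul_sum]
        simp only [Finset.mul_sum, ← Finset.sum_add_distrib]
        refine Finset.sum_congr rfl fun e₀ _ => Finset.sum_congr rfl fun x _ => by ring
    _ = (1/2) * ∑ A, c A a *
          bil (F A) (fun u => hM d q e y u) (fun v => hM d q e b v) := by
        rw [Finset.mul_sum]
        refine Finset.sum_congr rfl fun A _ => ?_
        have hz : ∑ e₀, c A e₀ * hM d q e y e₀ = 0 := by
          rw [← c_hM e c hce A y]
          exact Finset.sum_congr rfl fun e₀ _ => by rw [hM_symm]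
        rw [hz]
        unfold bil
        ring

lemma phi_in_V0_iii (hce : ∀ A i, ∑ a, c A a * e i a = 0)
    (F : Fin (p+1) → Matrix (Fin d) (Fin d) ℝ)
    (hF : ∀ A μ ν, F A μ ν = -F A ν μ) (a b c₀ : Fin d) :
    ∑ e₀, (hM d q e e₀ c₀ * phiMap d p q c e F b a e₀
         + hM d q e e₀ b * phiMap d p q c e F c₀ a e₀) = 0 := by
  rw [Finset.sum_add_distrib]
  have hs : ∀ y z w, ∑ e₀, hM d q e e₀ y * phiMap d p q c e F z w e₀
      = ∑ e₀, hM d q e y e₀ * phiMap d p q c e F z w e₀ :=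
    fun y z w => Finset.sum_congr rfl fun e₀ _ => by rw [hM_symm]
  rw [hs, hs, hM_phi e c hce F c₀ b a, hM_phi e c hce F b c₀ a]
  rw [← mul_add, ← Finset.sum_add_distrib]
  have : ∀ A, c A a * bil (F A) (fun u => hM d q e c₀ u) (fun v => hM d q e b v)
      + c A a * bil (F A) (fun u => hM d q e b u) (fun v => hM d q e c₀ v) = 0 := by
    intro A
    rw [← mul_add, bil_antisym (hF A), mul_zero]
  simp [this]


lemma cpt_symm (S : Fin d → Fin d → Fin d → ℝ)
    (hS1 : ∀ a b c₀, S a b c₀ = S a c₀ b) (α β γ : Sum (Fin (p+1)) (Fin q)) :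
    cpt t e c f S α β γ = cpt t e c f S α γ β := by
  unfold cpt
  refine Finset.sum_congr rfl fun a _ => ?_
  congr 1
  calc ∑ b, vU t e β b * ∑ c₀, vU t e γ c₀ * S a b c₀
      = ∑ c₀, vU t e γ c₀ * ∑ b, vU t e β b * S a b c₀ := sum_mul_swap _ _ _
    _ = ∑ c₀, vU t e γ c₀ * ∑ b, vU t e β b * S a c₀ b := by
        refine Finset.sum_congr rfl fun c₀ _ => ?_
        congr 1
        exact Finset.sum_congr rfl fun b _ => by rw [hS1]

lemma cpt_s2 (hfe : ∀ i j, ∑ a, f i a * e j a = if i = j then (1:ℝ) else 0)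
    (S : Fin d → Fin d → Fin d → ℝ)
    (hS3 : ∀ a b c₀, ∑ e₀, (hM d q e e₀ c₀ * S b a e₀ + hM d q e e₀ b * S c₀ a e₀) = 0)
    (k j : Fin q) (β : Sum (Fin (p+1)) (Fin q)) :
    cpt t e c f S (Sum.inr k) β (Sum.inr j)
      + cpt t e c f S (Sum.inr j) β (Sum.inr k) = 0 := by
  have h0 : ∑ a, vU t e β a * ∑ b, f k b * ∑ c₀, f j c₀ *
      (∑ e₀, (hM d q e e₀ c₀ * S b a e₀ + hM d q e e₀ b * S c₀ a e₀)) = 0 := by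
    simp only [hS3, mul_zero, Finset.sum_const_zero]
  have key : ∑ a, vU t e β a * ∑ b, f k b * ∑ c₀, f j c₀ *
      (∑ e₀, (hM d q e e₀ c₀ * S b a e₀ + hM d q e e₀ b * S c₀ a e₀))
      = cpt t e c f S (Sum.inr k) β (Sum.inr j)
      + cpt t e c f S (Sum.inr j) β (Sum.inr k) := by
    have inner : ∀ a b, ∑ c₀, f j c₀ *
        (∑ e₀, (hM d q e e₀ c₀ * S b a e₀ + hM d q e e₀ b * S c₀ a e₀))
        = (∑ e₀, e j e₀ * S b a e₀)
        + ∑ c₀, f j c₀ * ∑ e₀, hM d q e e₀ b * S c₀ a e₀ := by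
      intro a b
      have split : ∀ c₀, f j c₀ *
          (∑ e₀, (hM d q e e₀ c₀ * S b a e₀ + hM d q e e₀ b * S c₀ a e₀))
          = f j c₀ * (∑ e₀, hM d q e e₀ c₀ * S b a e₀)
          + f j c₀ * (∑ e₀, hM d q e e₀ b * S c₀ a e₀) := by
        intro c₀
        rw [Finset.sum_add_distrib, mul_add]
      simp only [split]
      rw [Finset.sum_add_distrib]
      congr 1
      calc ∑ c₀, f j c₀ * ∑ e₀, hM d q e e₀ c₀ * S b a e₀
          = ∑ c₀, f j c₀ * ∑ e₀, S b a e₀ * hM d q e e₀ c₀ := by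
            refine Finset.sum_congr rfl fun c₀ _ => ?_
            congr 1
            exact Finset.sum_congr rfl fun e₀ _ => by ring
        _ = ∑ e₀, S b a e₀ * ∑ c₀, f j c₀ * hM d q e e₀ c₀ := sum_mul_swap _ _ _
        _ = ∑ e₀, e j e₀ * S b a e₀ := by
            refine Finset.sum_congr rfl fun e₀ _ => ?_
            have : ∑ c₀, f j c₀ * hM d q e e₀ c₀ = e j e₀ := by
              rw [← f_hM e f hfe j e₀]
              exact Finset.sum_congr rfl fun c₀ _ => by rw [hM_symm]
            rw [this]
            ring
    have inner2 : ∀ a, ∑ b, f k b * ∑ c₀, f j c₀ * ∑ e₀, hM d q e e₀ b * S c₀ a e₀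
        = ∑ c₀, f j c₀ * ∑ e₀, e k e₀ * S c₀ a e₀ := by
      intro a
      rw [sum_mul_swap]
      refine Finset.sum_congr rfl fun c₀ _ => ?_
      congr 1
      calc ∑ b, f k b * ∑ e₀, hM d q e e₀ b * S c₀ a e₀
          = ∑ b, f k b * ∑ e₀, S c₀ a e₀ * hM d q e e₀ b := by
            refine Finset.sum_congr rfl fun b _ => ?_
            congr 1
            exact Finset.sum_congr rfl fun e₀ _ => by ring
        _ = ∑ e₀, S c₀ a e₀ * ∑ b, f k b * hM d q e e₀ b := sum_mul_swap _ _ _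
        _ = ∑ e₀, e k e₀ * S c₀ a e₀ := by
            refine Finset.sum_congr rfl fun e₀ _ => ?_
            have : ∑ b, f k b * hM d q e e₀ b = e k e₀ := by
              rw [← f_hM e f hfe k e₀]
              exact Finset.sum_congr rfl fun b _ => by rw [hM_symm]
            rw [this]
            ring
    calc ∑ a, vU t e β a * ∑ b, f k b * ∑ c₀, f j c₀ *
        (∑ e₀, (hM d q e e₀ c₀ * S b a e₀ + hM d q e e₀ b * S c₀ a e₀))
        = ∑ a, vU t e β a * ((∑ b, f k b * ∑ e₀, e j e₀ * S b a e₀)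
          + ∑ c₀, f j c₀ * ∑ e₀, e k e₀ * S c₀ a e₀) := by
          refine Finset.sum_congr rfl fun a _ => ?_
          congr 1
          calc ∑ b, f k b * ∑ c₀, f j c₀ *
              (∑ e₀, (hM d q e e₀ c₀ * S b a e₀ + hM d q e e₀ b * S c₀ a e₀))
              = ∑ b, f k b * ((∑ e₀, e j e₀ * S b a e₀)
                + ∑ c₀, f j c₀ * ∑ e₀, hM d q e e₀ b * S c₀ a e₀) := by
                refine Finset.sum_congr rfl fun b _ => ?_
                rw [inner a b]
            _ = (∑ b, f k b * ∑ e₀, e j e₀ * S b a e₀)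
                + ∑ b, f k b * ∑ c₀, f j c₀ * ∑ e₀, hM d q e e₀ b * S c₀ a e₀ := by
                rw [← Finset.sum_add_distrib]
                exact Finset.sum_congr rfl fun b _ => by rw [mul_add]
            _ = (∑ b, f k b * ∑ e₀, e j e₀ * S b a e₀)
                + ∑ c₀, f j c₀ * ∑ e₀, e k e₀ * S c₀ a e₀ := by
                rw [inner2 a]
      _ = (∑ a, vU t e β a * ∑ b, f k b * ∑ e₀, e j e₀ * S b a e₀)
          + ∑ a, vU t e β a * ∑ c₀, f j c₀ * ∑ e₀, e k e₀ * S c₀ a e₀ := by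
          rw [← Finset.sum_add_distrib]
          exact Finset.sum_congr rfl fun a _ => by rw [mul_add]
      _ = cpt t e c f S (Sum.inr k) β (Sum.inr j)
          + cpt t e c f S (Sum.inr j) β (Sum.inr k) := by
          congr 1
          · rw [sum_mul_swap]
            rfl
          · rw [sum_mul_swap]
            rfl
  rw [key] at h0
  exact h0


-- common inner step for the tau condition
lemma tau_inner (hct : ∀ A B, ∑ a, c A a * t B a = if A = B then (1:ℝ) else 0)
    (S : Fin d → Fin d → Fin d → ℝ) (C : Fin (p+1)) (a b : Fin d) :
    ∑ c₀, t C c₀ * (∑ e₀, (S e₀ a b * tauM d p c c₀ e₀ + S e₀ a c₀ * tauM d p c b e₀))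
      = eps p C * ∑ e₀, c C e₀ * S e₀ a b
        + ∑ e₀, tauM d p c b e₀ * ∑ c₀, t C c₀ * S e₀ a c₀ := by
  have split : ∀ c₀, t C c₀ *
      (∑ e₀, (S e₀ a b * tauM d p c c₀ e₀ + S e₀ a c₀ * tauM d p c b e₀))
      = t C c₀ * (∑ e₀, S e₀ a b * tauM d p c c₀ e₀)
      + t C c₀ * (∑ e₀, tauM d p c b e₀ * S e₀ a c₀) := by
    intro c₀
    rw [Finset.sum_add_distrib, mul_add]
    congr 2
    exact Finset.sum_congr rfl fun e₀ _ => by ring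
  simp only [split]
  rw [Finset.sum_add_distrib]
  congr 1
  · calc ∑ c₀, t C c₀ * ∑ e₀, S e₀ a b * tauM d p c c₀ e₀
        = ∑ e₀, S e₀ a b * ∑ c₀, t C c₀ * tauM d p c c₀ e₀ := sum_mul_swap _ _ _
      _ = eps p C * ∑ e₀, c C e₀ * S e₀ a b := by
          rw [Finset.mul_sum]
          refine Finset.sum_congr rfl fun e₀ _ => ?_
          rw [tau_t t c hct C e₀]
          ring
  · exact sum_mul_swap _ _ _

lemma cpt_s1a (hct : ∀ A B, ∑ a, c A a * t B a = if A = B then (1:ℝ) else 0)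
    (hce : ∀ A i, ∑ a, c A a * e i a = 0)
    (S : Fin d → Fin d → Fin d → ℝ)
    (hS2 : ∀ a b c₀, ∑ e₀, (S e₀ a b * tauM d p c c₀ e₀
      + S e₀ a c₀ * tauM d p c b e₀) = 0)
    (C : Fin (p+1)) (j : Fin q) (β : Sum (Fin (p+1)) (Fin q)) :
    cpt t e c f S (Sum.inl C) β (Sum.inr j) = 0 := by
  have h0 : ∑ a, vU t e β a * ∑ b, e j b * ∑ c₀, t C c₀ *
      (∑ e₀, (S e₀ a b * tauM d p c c₀ e₀ + S e₀ a c₀ * tauM d p c b e₀)) = 0 := by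
    simp only [hS2, mul_zero, Finset.sum_const_zero]
  have key : ∑ a, vU t e β a * ∑ b, e j b * ∑ c₀, t C c₀ *
      (∑ e₀, (S e₀ a b * tauM d p c c₀ e₀ + S e₀ a c₀ * tauM d p c b e₀))
      = eps p C * cpt t e c f S (Sum.inl C) β (Sum.inr j) := by
    have hb : ∀ a, ∑ b, e j b * ∑ c₀, t C c₀ *
        (∑ e₀, (S e₀ a b * tauM d p c c₀ e₀ + S e₀ a c₀ * tauM d p c b e₀))
        = eps p C * ∑ b, e j b * ∑ e₀, c C e₀ * S e₀ a b := by
      intro a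
      have : ∀ b, e j b * ∑ c₀, t C c₀ *
          (∑ e₀, (S e₀ a b * tauM d p c c₀ e₀ + S e₀ a c₀ * tauM d p c b e₀))
          = e j b * (eps p C * ∑ e₀, c C e₀ * S e₀ a b)
            + e j b * ∑ e₀, tauM d p c b e₀ * ∑ c₀, t C c₀ * S e₀ a c₀ := by
        intro b
        rw [tau_inner t c hct S C a b, mul_add]
      simp only [this]
      rw [Finset.sum_add_distrib]
      have h2 : ∑ b, e j b * ∑ e₀, tauM d p c b e₀ * ∑ c₀, t C c₀ * S e₀ a c₀
          = 0 := by
        have hc : ∀ b, ∑ e₀, tauM d p c b e₀ * ∑ c₀, t C c₀ * S e₀ a c₀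
            = ∑ e₀, (∑ c₀, t C c₀ * S e₀ a c₀) * tauM d p c b e₀ :=
          fun b => Finset.sum_congr rfl fun e₀ _ => by ring
        simp only [hc]
        rw [sum_mul_swap]
        have : ∀ e₀, ∑ b, e j b * tauM d p c b e₀ = 0 := fun e₀ => tau_e e c hce j e₀
        simp [this]
      rw [h2, add_zero, Finset.mul_sum]
      exact Finset.sum_congr rfl fun b _ => by ring
    simp only [hb]
    rw [cpt_reorder, Finset.mul_sum]
    refine Finset.sum_congr rfl fun x _ => ?_
    have hd : (∑ c₀, vU t e (Sum.inr j) c₀ * ∑ a₀, cU c f (Sum.inl C) a₀ * S a₀ x c₀)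
        = ∑ b, e j b * ∑ e₀, c C e₀ * S e₀ x b := rfl
    rw [hd]
    ring
  rw [key] at h0
  rcases mul_eq_zero.mp h0 with h | h
  · exact absurd h (eps_ne_zero C)
  · exact h


lemma cpt_s1b (hct : ∀ A B, ∑ a, c A a * t B a = if A = B then (1:ℝ) else 0)
    (S : Fin d → Fin d → Fin d → ℝ)
    (hS2 : ∀ a b c₀, ∑ e₀, (S e₀ a b * tauM d p c c₀ e₀
      + S e₀ a c₀ * tauM d p c b e₀) = 0)
    (C B : Fin (p+1)) (β : Sum (Fin (p+1)) (Fin q)) :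
    eps p C * cpt t e c f S (Sum.inl C) β (Sum.inl B)
      + eps p B * cpt t e c f S (Sum.inl B) β (Sum.inl C) = 0 := by
  have h0 : ∑ a, vU t e β a * ∑ b, t B b * ∑ c₀, t C c₀ *
      (∑ e₀, (S e₀ a b * tauM d p c c₀ e₀ + S e₀ a c₀ * tauM d p c b e₀)) = 0 := by
    simp only [hS2, mul_zero, Finset.sum_const_zero]
  have hb : ∀ a, ∑ b, t B b * ∑ c₀, t C c₀ *
      (∑ e₀, (S e₀ a b * tauM d p c c₀ e₀ + S e₀ a c₀ * tauM d p c b e₀))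
      = eps p C * ∑ b, t B b * ∑ e₀, c C e₀ * S e₀ a b
        + eps p B * ∑ e₀, c B e₀ * ∑ c₀, t C c₀ * S e₀ a c₀ := by
    intro a
    have h1 : ∀ b, t B b * ∑ c₀, t C c₀ *
        (∑ e₀, (S e₀ a b * tauM d p c c₀ e₀ + S e₀ a c₀ * tauM d p c b e₀))
        = eps p C * (t B b * ∑ e₀, c C e₀ * S e₀ a b)
          + t B b * ∑ e₀, tauM d p c b e₀ * ∑ c₀, t C c₀ * S e₀ a c₀ := by
      intro b
      rw [tau_inner t c hct S C a b, mul_add]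
      ring
    simp only [h1]
    rw [Finset.sum_add_distrib]
    congr 1
    · rw [Finset.mul_sum]
    · have h2 : ∀ b, t B b * ∑ e₀, tauM d p c b e₀ * ∑ c₀, t C c₀ * S e₀ a c₀
          = t B b * ∑ e₀, (∑ c₀, t C c₀ * S e₀ a c₀) * tauM d p c b e₀ := by
        intro b
        congr 1
        exact Finset.sum_congr rfl fun e₀ _ => by ring
      simp only [h2]
      rw [sum_mul_swap]
      have h3 : ∀ e₀, ∑ b, t B b * tauM d p c b e₀ = eps p B * c B e₀ :=
        fun e₀ => tau_t t c hct B e₀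
      calc ∑ e₀, (∑ c₀, t C c₀ * S e₀ a c₀) * ∑ b, t B b * tauM d p c b e₀
          = ∑ e₀, (∑ c₀, t C c₀ * S e₀ a c₀) * (eps p B * c B e₀) := by
            refine Finset.sum_congr rfl fun e₀ _ => ?_
            rw [h3]
        _ = eps p B * ∑ e₀, c B e₀ * ∑ c₀, t C c₀ * S e₀ a c₀ := by
            rw [Finset.mul_sum]
            exact Finset.sum_congr rfl fun e₀ _ => by ring
  have key : ∑ a, vU t e β a * ∑ b, t B b * ∑ c₀, t C c₀ *
      (∑ e₀, (S e₀ a b * tauM d p c c₀ e₀ + S e₀ a c₀ * tauM d p c b e₀))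
      = eps p C * cpt t e c f S (Sum.inl C) β (Sum.inl B)
        + eps p B * cpt t e c f S (Sum.inl B) β (Sum.inl C) := by
    simp only [hb, mul_add]
    rw [Finset.sum_add_distrib]
    congr 1
    · rw [cpt_reorder, Finset.mul_sum]
      refine Finset.sum_congr rfl fun x _ => ?_
      have hd : (∑ c₀, vU t e (Sum.inl B) c₀ * ∑ a₀, cU c f (Sum.inl C) a₀ * S a₀ x c₀)
          = ∑ b, t B b * ∑ e₀, c C e₀ * S e₀ x b := rfl
      rw [hd]
      ring
    · rw [cpt_reorder, Finset.mul_sum]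
      refine Finset.sum_congr rfl fun x _ => ?_
      have hs : ∑ e₀, c B e₀ * ∑ c₀, t C c₀ * S e₀ x c₀
          = ∑ c₀, t C c₀ * ∑ e₀, c B e₀ * S e₀ x c₀ := sum_mul_swap _ _ _
      rw [hs]
      have hd : (∑ c₀, vU t e (Sum.inl C) c₀ * ∑ a₀, cU c f (Sum.inl B) a₀ * S a₀ x c₀)
          = ∑ c₀, t C c₀ * ∑ e₀, c B e₀ * S e₀ x c₀ := rfl
      rw [hd]
      ring
  rw [key] at h0
  exact h0


lemma cpt_s0 (hct : ∀ A B, ∑ a, c A a * t B a = if A = B then (1:ℝ) else 0)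
    (S : Fin d → Fin d → Fin d → ℝ)
    (hS1 : ∀ a b c₀, S a b c₀ = S a c₀ b)
    (hS2 : ∀ a b c₀, ∑ e₀, (S e₀ a b * tauM d p c c₀ e₀
      + S e₀ a c₀ * tauM d p c b e₀) = 0)
    (A B C : Fin (p+1)) :
    cpt t e c f S (Sum.inl A) (Sum.inl B) (Sum.inl C) = 0 := by
  set g : Fin (p+1) → Fin (p+1) → Fin (p+1) → ℝ :=
    fun D E G => cpt t e c f S (Sum.inl D) (Sum.inl E) (Sum.inl G) with hg
  have h13 : ∀ D E G, eps p D * g D E G = - (eps p G * g G E D) := by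
    intro D E G
    have := cpt_s1b t e c f hct S hS2 D G (Sum.inl E)
    simp only [hg]
    linarith
  have h23 : ∀ D E G, g D E G = g D G E := by
    intro D E G
    exact cpt_symm t e c f S hS1 _ _ _
  have key : eps p A * g A B C = - (eps p A * g A B C) := by
    calc eps p A * g A B C
        = - (eps p C * g C B A) := h13 A B C
      _ = - (eps p C * g C A B) := by rw [h23 C B A]
      _ = - (- (eps p B * g B A C)) := by rw [h13 C A B]
      _ = eps p B * g B A C := by ring
      _ = eps p B * g B C A := by rw [h23 B A C]
      _ = - (eps p A * g A C B) := h13 B C A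
      _ = - (eps p A * g A B C) := by rw [h23 A B C]
  have h0 : eps p A * g A B C = 0 := by linarith
  rcases mul_eq_zero.mp h0 with h | h
  · exact absurd h (eps_ne_zero A)
  · exact h

lemma cpt_inl_zero (hct : ∀ A B, ∑ a, c A a * t B a = if A = B then (1:ℝ) else 0)
    (hce : ∀ A i, ∑ a, c A a * e i a = 0)
    (S : Fin d → Fin d → Fin d → ℝ)
    (hS1 : ∀ a b c₀, S a b c₀ = S a c₀ b)
    (hS2 : ∀ a b c₀, ∑ e₀, (S e₀ a b * tauM d p c c₀ e₀
      + S e₀ a c₀ * tauM d p c b e₀) = 0)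
    (A : Fin (p+1)) (β γ : Sum (Fin (p+1)) (Fin q)) :
    cpt t e c f S (Sum.inl A) β γ = 0 := by
  cases γ with
  | inr j => exact cpt_s1a t e c f hct hce S hS2 A j β
  | inl C =>
    cases β with
    | inr i =>
      rw [cpt_symm t e c f S hS1]
      exact cpt_s1a t e c f hct hce S hS2 A i (Sum.inl C)
    | inl B => exact cpt_s0 t e c f hct S hS1 hS2 A B C

lemma cpt_s3 (hfe : ∀ i j, ∑ a, f i a * e j a = if i = j then (1:ℝ) else 0)
    (S : Fin d → Fin d → Fin d → ℝ)
    (hS1 : ∀ a b c₀, S a b c₀ = S a c₀ b)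
    (hS3 : ∀ a b c₀, ∑ e₀, (hM d q e e₀ c₀ * S b a e₀ + hM d q e e₀ b * S c₀ a e₀) = 0)
    (k i j : Fin q) :
    cpt t e c f S (Sum.inr k) (Sum.inr i) (Sum.inr j) = 0 := by
  set g : Fin q → Fin q → Fin q → ℝ :=
    fun u v w => cpt t e c f S (Sum.inr u) (Sum.inr v) (Sum.inr w) with hg
  have h13 : ∀ u v w, g u v w = - g w v u := by
    intro u v w
    have := cpt_s2 t e c f hfe S hS3 u w (Sum.inr v)
    simp only [hg]
    linarith
  have h23 : ∀ u v w, g u v w = g u w v := by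
    intro u v w
    exact cpt_symm t e c f S hS1 _ _ _
  have key : g k i j = - g k i j := by
    calc g k i j = - g j i k := h13 k i j
      _ = - g j k i := by rw [h23 j i k]
      _ = g i k j := by rw [h13 j k i]; ring
      _ = g i j k := by rw [h23 i k j]
      _ = - g k j i := h13 i j k
      _ = - g k i j := by rw [h23 k j i]
  linarith


lemma factor3 {ι κ Λ : Type*} [Fintype ι] [Fintype κ] [Fintype Λ]
    (P : ι → ℝ) (Q : κ → ℝ) (R : ι → Λ → ℝ) :
    ∑ μ, ∑ ν, ∑ e₀, P μ * Q ν * R μ e₀ = (∑ ν, Q ν) * ∑ μ, ∑ e₀, P μ * R μ e₀ := by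
  rw [Finset.sum_comm]
  rw [Finset.sum_mul]
  refine Finset.sum_congr rfl fun ν _ => ?_
  simp only [Finset.mul_sum]
  refine Finset.sum_congr rfl fun μ _ => Finset.sum_congr rfl fun e₀ _ => by ring

lemma bil_psi (hft : ∀ i A, ∑ a, f i a * t A a = 0)
    (hfe : ∀ i j, ∑ a, f i a * e j a = if i = j then (1:ℝ) else 0)
    (S : Fin d → Fin d → Fin d → ℝ) (A : Fin (p+1)) (u : Fin d → ℝ) (k : Fin q) :
    bil (Matrix.of fun a b => psiMap d p q t f S A a b) u (e k)
      = (∑ c₀, f k c₀ * ∑ μ, u μ * ∑ e₀, t A e₀ * S c₀ μ e₀)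
      - ∑ c₀, (∑ μ, u μ * hhatM d q f c₀ μ) * ∑ ν, e k ν * ∑ e₀, t A e₀ * S c₀ ν e₀ := by
  have expand : bil (Matrix.of fun a b => psiMap d p q t f S A a b) u (e k)
      = (∑ μ, ∑ ν, ∑ c₀, ∑ e₀,
          u μ * (e k ν * hhatM d q f c₀ ν) * (S c₀ μ e₀ * t A e₀))
      - ∑ μ, ∑ ν, ∑ c₀, ∑ e₀,
          (e k ν) * (u μ * hhatM d q f c₀ μ) * (S c₀ ν e₀ * t A e₀) := by
    unfold bil
    rw [← Finset.sum_sub_distrib]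
    refine Finset.sum_congr rfl fun μ _ => ?_
    rw [← Finset.sum_sub_distrib]
    refine Finset.sum_congr rfl fun ν _ => ?_
    have hM : u μ * (Matrix.of fun a b => psiMap d p q t f S A a b) μ ν * e k ν
        = ∑ c₀, ∑ e₀, (u μ * (e k ν * hhatM d q f c₀ ν) * (S c₀ μ e₀ * t A e₀)
            - (e k ν) * (u μ * hhatM d q f c₀ μ) * (S c₀ ν e₀ * t A e₀)) := by
      have : (Matrix.of fun a b => psiMap d p q t f S A a b) μ ν
          = ∑ c₀, ∑ e₀, (hhatM d q f c₀ ν * S c₀ μ e₀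
              - hhatM d q f c₀ μ * S c₀ ν e₀) * t A e₀ := rfl
      rw [this]
      simp only [Finset.mul_sum, Finset.sum_mul]
      refine Finset.sum_congr rfl fun c₀ _ => ?_
      refine Finset.sum_congr rfl fun e₀ _ => by ring
    rw [hM, ← Finset.sum_sub_distrib]
    exact Finset.sum_congr rfl fun c₀ _ => by rw [Finset.sum_sub_distrib]
  rw [expand]
  congr 1
  · rw [reorder4a]
    refine Finset.sum_congr rfl fun c₀ _ => ?_
    rw [factor3]
    have hq : ∑ ν, e k ν * hhatM d q f c₀ ν = f k c₀ := by
      rw [← hhat_e e f hfe k c₀]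
      exact Finset.sum_congr rfl fun ν _ => by ring
    rw [hq]
    congr 1
    refine Finset.sum_congr rfl fun μ _ => ?_
    rw [Finset.mul_sum]
    exact Finset.sum_congr rfl fun e₀ _ => by ring
  · rw [Finset.sum_comm, reorder4a]
    refine Finset.sum_congr rfl fun c₀ _ => ?_
    rw [factor3]
    congr 1
    refine Finset.sum_congr rfl fun ν _ => ?_
    rw [Finset.mul_sum]
    exact Finset.sum_congr rfl fun e₀ _ => by ring


lemma bil_psi_t (hft : ∀ i A, ∑ a, f i a * t A a = 0)
    (hfe : ∀ i j, ∑ a, f i a * e j a = if i = j then (1:ℝ) else 0)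
    (S : Fin d → Fin d → Fin d → ℝ) (A B : Fin (p+1)) (k : Fin q) :
    bil (Matrix.of fun a b => psiMap d p q t f S A a b) (t B) (e k)
      = cpt t e c f S (Sum.inr k) (Sum.inl B) (Sum.inl A) := by
  rw [bil_psi t e f hft hfe S A (t B) k]
  have h2 : ∀ c₀, ∑ μ, t B μ * hhatM d q f c₀ μ = 0 := by
    intro c₀
    rw [← hhat_t t f hft B c₀]
    exact Finset.sum_congr rfl fun μ _ => by ring
  simp only [h2, zero_mul, Finset.sum_const_zero, sub_zero]
  rfl

lemma bil_psi_e (hft : ∀ i A, ∑ a, f i a * t A a = 0)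
    (hfe : ∀ i j, ∑ a, f i a * e j a = if i = j then (1:ℝ) else 0)
    (S : Fin d → Fin d → Fin d → ℝ) (A : Fin (p+1)) (j k : Fin q) :
    bil (Matrix.of fun a b => psiMap d p q t f S A a b) (e j) (e k)
      = cpt t e c f S (Sum.inr k) (Sum.inr j) (Sum.inl A)
      - cpt t e c f S (Sum.inr j) (Sum.inr k) (Sum.inl A) := by
  rw [bil_psi t e f hft hfe S A (e j) k]
  have h2 : ∀ c₀, ∑ μ, e j μ * hhatM d q f c₀ μ = f j c₀ := by
    intro c₀
    rw [← hhat_e e f hfe j c₀]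
    exact Finset.sum_congr rfl fun μ _ => by ring
  simp only [h2]
  rfl

lemma vU_inl (A : Fin (p+1)) : vU t e (Sum.inl A) = t A := rfl
lemma vU_inr (i : Fin q) : vU t e (Sum.inr i) = e i := rfl

lemma part2 (hct : ∀ A B, ∑ a, c A a * t B a = if A = B then (1:ℝ) else 0)
    (hce : ∀ A i, ∑ a, c A a * e i a = 0)
    (hft : ∀ i A, ∑ a, f i a * t A a = 0)
    (hfe : ∀ i j, ∑ a, f i a * e j a = if i = j then (1:ℝ) else 0)
    (hcomp : ∀ a b, ((∑ A, t A a * c A b) + ∑ i, e i a * f i b)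
      = if a = b then (1:ℝ) else 0)
    (S : Fin d → Fin d → Fin d → ℝ)
    (hS1 : ∀ a b c₀, S a b c₀ = S a c₀ b)
    (hS2 : ∀ a b c₀, ∑ e₀, (S e₀ a b * tauM d p c c₀ e₀
      + S e₀ a c₀ * tauM d p c b e₀) = 0)
    (hS3 : ∀ a b c₀, ∑ e₀, (hM d q e e₀ c₀ * S b a e₀ + hM d q e e₀ b * S c₀ a e₀) = 0) :
    phiMap d p q c e (fun A => Matrix.of fun a b => psiMap d p q t f S A a b) = S := by
  apply tensor_ext t e c f hcomp
  intro α β γ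
  cases α with
  | inl A =>
    rw [cpt_phi_inl t e c f hce _ A β γ,
      cpt_inl_zero t e c f hct hce S hS1 hS2 A β γ]
  | inr k =>
    rw [cpt_phi_inr t e c f hct hce hft hfe _ k β γ]
    cases β with
    | inl B =>
      cases γ with
      | inl C =>
        simp only [Sum.elim_inl, vU_inl]
        rw [bil_psi_t t e c f hft hfe S B C k, bil_psi_t t e c f hft hfe S C B k]
        rw [cpt_symm t e c f S hS1 (Sum.inr k) (Sum.inl C) (Sum.inl B)]
        ring
      | inr j =>
        simp only [Sum.elim_inl, Sum.elim_inr, vU_inl, vU_inr]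
        rw [bil_psi_e t e c f hft hfe S B j k]
        have h1 : cpt t e c f S (Sum.inr k) (Sum.inr j) (Sum.inl B)
            = cpt t e c f S (Sum.inr k) (Sum.inl B) (Sum.inr j) :=
          cpt_symm t e c f S hS1 _ _ _
        have h2 : cpt t e c f S (Sum.inr j) (Sum.inr k) (Sum.inl B)
            = cpt t e c f S (Sum.inr j) (Sum.inl B) (Sum.inr k) :=
          cpt_symm t e c f S hS1 _ _ _
        have h3 := cpt_s2 t e c f hfe S hS3 k j (Sum.inl B)
        rw [h1, h2]
        linarith
    | inr i =>
      cases γ with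
      | inl C =>
        simp only [Sum.elim_inl, Sum.elim_inr, vU_inl, vU_inr]
        rw [bil_psi_e t e c f hft hfe S C i k]
        have h1 : cpt t e c f S (Sum.inr i) (Sum.inr k) (Sum.inl C)
            = cpt t e c f S (Sum.inr i) (Sum.inl C) (Sum.inr k) :=
          cpt_symm t e c f S hS1 _ _ _
        have h2 : cpt t e c f S (Sum.inr k) (Sum.inl C) (Sum.inr i)
            = cpt t e c f S (Sum.inr k) (Sum.inr i) (Sum.inl C) :=
          cpt_symm t e c f S hS1 _ _ _
        have h3 := cpt_s2 t e c f hfe S hS3 k i (Sum.inl C)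
        rw [h2] at h3
        linarith
      | inr j =>
        simp only [Sum.elim_inr]
        rw [cpt_s3 t e c f hfe S hS1 hS3 k i j]
        ring

lemma phi_sub (F F' : Fin (p+1) → Matrix (Fin d) (Fin d) ℝ) (a b c₀ : Fin d) :
    phiMap d p q c e (F - F') a b c₀
      = phiMap d p q c e F a b c₀ - phiMap d p q c e F' a b c₀ := by
  unfold phiMap
  rw [← mul_sub, ← Finset.sum_sub_distrib]
  congr 1
  refine Finset.sum_congr rfl fun A _ => ?_
  rw [← Finset.sum_sub_distrib]
  refine Finset.sum_congr rfl fun x _ => ?_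
  have h1 : (F - F') A c₀ x = F A c₀ x - F' A c₀ x := rfl
  have h2 : (F - F') A b x = F A b x - F' A b x := rfl
  rw [h1, h2]
  ring

lemma e_ker_tau (hce : ∀ A i, ∑ a, c A a * e i a = 0) (k : Fin q) (a : Fin d) :
    ∑ b, tauM d p c a b * e k b = 0 := by
  have h1 : ∑ b, tauM d p c a b * e k b
      = ∑ b, e k b * ∑ A, (eps p A * c A a) * c A b := by
    refine Finset.sum_congr rfl fun b _ => ?_
    rw [tauM_eq]
    rw [mul_comm]
  rw [h1, sum_mul_swap]
  have h2 : ∀ A, ∑ b, e k b * c A b = 0 := by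
    intro A
    rw [← hce A k]
    exact Finset.sum_congr rfl fun b _ => by ring
  simp [h2]

lemma ker_c (hct : ∀ A B, ∑ a, c A a * t B a = if A = B then (1:ℝ) else 0)
    (v : Fin d → ℝ) (hv : ∀ a, ∑ b, tauM d p c a b * v b = 0) (A : Fin (p+1)) :
    ∑ b, c A b * v b = 0 := by
  have h0 : ∑ a, t A a * ∑ b, tauM d p c a b * v b = 0 := by
    simp only [hv, mul_zero, Finset.sum_const_zero]
  have h1 : ∑ a, t A a * ∑ b, tauM d p c a b * v b
      = ∑ b, v b * ∑ a, t A a * tauM d p c a b := by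
    have : ∀ a, ∑ b, tauM d p c a b * v b = ∑ b, v b * tauM d p c a b :=
      fun a => Finset.sum_congr rfl fun b _ => by ring
    simp only [this]
    exact sum_mul_swap _ _ _
  have h2 : ∑ b, v b * ∑ a, t A a * tauM d p c a b
      = eps p A * ∑ b, c A b * v b := by
    rw [Finset.mul_sum]
    refine Finset.sum_congr rfl fun b _ => ?_
    rw [tau_t t c hct A b]
    ring
  rw [h1, h2] at h0
  rcases mul_eq_zero.mp h0 with h | h
  · exact absurd h (eps_ne_zero A)
  · exact h

lemma v_spatial (hct : ∀ A B, ∑ a, c A a * t B a = if A = B then (1:ℝ) else 0)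
    (hcomp : ∀ a b, ((∑ A, t A a * c A b) + ∑ i, e i a * f i b)
      = if a = b then (1:ℝ) else 0)
    (v : Fin d → ℝ) (hv : ∀ a, ∑ b, tauM d p c a b * v b = 0) (x : Fin d) :
    v x = ∑ i, e i x * ∑ b, f i b * v b := by
  have h0 := (resolve_up t e c f hcomp v x).symm
  rw [Fintype.sum_sum_type] at h0
  have h1 : ∀ A : Fin (p+1), vU t e (Sum.inl A) x * ∑ a, cU c f (Sum.inl A) a * v a
      = 0 := by
    intro A
    have : ∑ a, cU c f (Sum.inl A) a * v a = 0 := ker_c t c hct v hv A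
    rw [this, mul_zero]
  rw [h0]
  simp only [h1, Finset.sum_const_zero, zero_add]
  rfl

lemma reorder3 {ι₁ ι₂ ι₃ : Type*} [Fintype ι₁] [Fintype ι₂] [Fintype ι₃]
    (g : ι₁ → ι₂ → ι₃ → ℝ) :
    ∑ a, ∑ b, ∑ i, g a b i = ∑ i, ∑ a, ∑ b, g a b i := by
  calc ∑ a, ∑ b, ∑ i, g a b i
      = ∑ a, ∑ i, ∑ b, g a b i := Finset.sum_congr rfl fun a _ => Finset.sum_comm
    _ = ∑ i, ∑ a, ∑ b, g a b i := Finset.sum_comm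

lemma bil_dec_right (M : Matrix (Fin d) (Fin d) ℝ) (u v : Fin d → ℝ)
    (hvx : ∀ x, v x = ∑ i, e i x * ∑ b, f i b * v b) :
    bil M u v = ∑ i, (∑ b, f i b * v b) * bil M u (e i) := by
  unfold bil
  calc ∑ μ, ∑ ν, u μ * M μ ν * v ν
      = ∑ μ, ∑ ν, ∑ i, (∑ b, f i b * v b) * (u μ * M μ ν * e i ν) := by
        refine Finset.sum_congr rfl fun μ _ => Finset.sum_congr rfl fun ν _ => ?_
        rw [hvx ν, Finset.mul_sum]
        exact Finset.sum_congr rfl fun i _ => by ring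
    _ = ∑ i, ∑ μ, ∑ ν, (∑ b, f i b * v b) * (u μ * M μ ν * e i ν) := reorder3 _
    _ = ∑ i, (∑ b, f i b * v b) * ∑ μ, ∑ ν, u μ * M μ ν * e i ν := by
        refine Finset.sum_congr rfl fun i _ => ?_
        simp only [Finset.mul_sum]

lemma bil_dec_left (M : Matrix (Fin d) (Fin d) ℝ) (u v : Fin d → ℝ)
    (hux : ∀ x, u x = ∑ i, e i x * ∑ b, f i b * u b) :
    bil M u v = ∑ i, (∑ b, f i b * u b) * bil M (e i) v := by
  unfold bil
  calc ∑ μ, ∑ ν, u μ * M μ ν * v ν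
      = ∑ μ, ∑ ν, ∑ i, (∑ b, f i b * u b) * (e i μ * M μ ν * v ν) := by
        refine Finset.sum_congr rfl fun μ _ => Finset.sum_congr rfl fun ν _ => ?_
        rw [hux μ, Finset.sum_mul, Finset.sum_mul]
        exact Finset.sum_congr rfl fun i _ => by ring
    _ = ∑ i, ∑ μ, ∑ ν, (∑ b, f i b * u b) * (e i μ * M μ ν * v ν) := reorder3 _
    _ = ∑ i, (∑ b, f i b * u b) * ∑ μ, ∑ ν, e i μ * M μ ν * v ν := by
        refine Finset.sum_congr rfl fun i _ => ?_
        simp only [Finset.mul_sum]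


lemma cpt_of_zero (α β γ : Sum (Fin (p+1)) (Fin q)) :
    cpt t e c f (fun _ _ _ => (0:ℝ)) α β γ = 0 := by
  unfold cpt
  simp

end Work

/-- Proposition 7: the induced map `φ̄` from `⊕_{p+1}Ω²/Ker φ` to `𝔙(M,τ,h)` is a linear
isomorphism with inverse `S ↦ [2ĥ_{c[b}S^c_{a]d}τ^d_A]`: `φ` maps into `𝔙`, it is
surjective onto `𝔙` with `φ∘ψ = id` on `𝔙`, and `φ F = φ F'` iff `F − F' ∈ Ker φ`. -/
theorem phi_bar_isomorphism (d p q : ℕ)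
    (t : Fin (p+1) → Fin d → ℝ) (e : Fin q → Fin d → ℝ)
    (c : Fin (p+1) → Fin d → ℝ) (f : Fin q → Fin d → ℝ)
    (hct : ∀ A B, ∑ a, c A a * t B a = if A = B then (1:ℝ) else 0)
    (hce : ∀ A i, ∑ a, c A a * e i a = 0)
    (hft : ∀ i A, ∑ a, f i a * t A a = 0)
    (hfe : ∀ i j, ∑ a, f i a * e j a = if i = j then (1:ℝ) else 0)
    (hcomp : ∀ a b, ((∑ A, t A a * c A b) + ∑ i, e i a * f i b)
      = if a = b then (1:ℝ) else 0) :
    (∀ F : Fin (p+1) → Matrix (Fin d) (Fin d) ℝ, (∀ A μ ν, F A μ ν = -F A ν μ) →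
      InV0 d p q c e (phiMap d p q c e F)) ∧
    (∀ S : Fin d → Fin d → Fin d → ℝ, InV0 d p q c e S →
      phiMap d p q c e (fun A => Matrix.of fun a b => psiMap d p q t f S A a b) = S) ∧
    (∀ F F' : Fin (p+1) → Matrix (Fin d) (Fin d) ℝ,
      (∀ A μ ν, F A μ ν = -F A ν μ) → (∀ A μ ν, F' A μ ν = -F' A ν μ) →
      (phiMap d p q c e F = phiMap d p q c e F' ↔ InKerPhi d p q t c (F - F'))) := by
  refine ⟨?_, ?_, ?_⟩
  · -- Part 1
    intro F hF
    refine ⟨fun a b c₀ => phi_symm e c F a b c₀, fun a b c₀ => ?_,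
      fun a b c₀ => phi_in_V0_iii e c hce F hF a b c₀⟩
    rw [Finset.sum_add_distrib, phi_tau e c hce F c₀ a b, phi_tau e c hce F b a c₀]
    norm_num
  · -- Part 2
    intro S hS
    exact part2 t e c f hct hce hft hfe hcomp S hS.1 hS.2.1 hS.2.2
  · -- Part 3
    intro F F' hF hF'
    constructor
    · intro hEq
      have hK0 : ∀ a b c₀, phiMap d p q c e (F - F') a b c₀ = 0 := by
        intro a b c₀
        rw [phi_sub e c F F' a b c₀]
        have h := congrFun (congrFun (congrFun hEq a) b) c₀
        rw [h]
        ring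
      have hcptK : ∀ (α β γ : Sum (Fin (p+1)) (Fin q)),
          cpt t e c f (phiMap d p q c e (F - F')) α β γ = 0 := by
        intro α β γ
        unfold cpt
        simp [hK0]
      have C1 : ∀ (B C : Fin (p+1)) (kk : Fin q),
          bil ((F - F') B) (t C) (e kk) + bil ((F - F') C) (t B) (e kk) = 0 := by
        intro B C kk
        have h := cpt_phi_inr t e c f hct hce hft hfe (F - F') kk (Sum.inl B) (Sum.inl C)
        rw [hcptK (Sum.inr kk) (Sum.inl B) (Sum.inl C)] at h
        simp only [Sum.elim_inl, vU_inl] at h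
        linarith
      have C2 : ∀ (B : Fin (p+1)) (jj kk : Fin q),
          bil ((F - F') B) (e jj) (e kk) = 0 := by
        intro B jj kk
        have h := cpt_phi_inr t e c f hct hce hft hfe (F - F') kk (Sum.inl B) (Sum.inr jj)
        rw [hcptK (Sum.inr kk) (Sum.inl B) (Sum.inr jj)] at h
        simp only [Sum.elim_inl, Sum.elim_inr, vU_inr] at h
        linarith
      refine ⟨?_, ?_⟩
      · intro A B v hv
        have hvx : ∀ x, v x = ∑ i, e i x * ∑ b, f i b * v b :=
          fun x => v_spatial t e c f hct hcomp v hv x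
        have g1 : (∑ μ, ∑ ν, t B μ * (F - F') A μ ν * v ν)
            = bil ((F - F') A) (t B) v := rfl
        have g2 : (∑ μ, ∑ ν, t A μ * (F - F') B μ ν * v ν)
            = bil ((F - F') B) (t A) v := rfl
        rw [g1, g2, bil_dec_right e f _ _ v hvx, bil_dec_right e f _ _ v hvx]
        have hterm : ∀ i, (∑ b, f i b * v b) * bil ((F - F') A) (t B) (e i)
            = -((∑ b, f i b * v b) * bil ((F - F') B) (t A) (e i)) := by
          intro i
          have h := C1 A B i
          have hx : bil ((F - F') A) (t B) (e i)
              = -bil ((F - F') B) (t A) (e i) := by linarith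
          rw [hx]
          ring
        simp only [hterm]
        rw [Finset.sum_neg_distrib]
      · intro A v w hv hw
        have hvx : ∀ x, v x = ∑ i, e i x * ∑ b, f i b * v b :=
          fun x => v_spatial t e c f hct hcomp v hv x
        have hwx : ∀ x, w x = ∑ i, e i x * ∑ b, f i b * w b :=
          fun x => v_spatial t e c f hct hcomp w hw x
        have g : (∑ μ, ∑ ν, v μ * (F - F') A μ ν * w ν)
            = bil ((F - F') A) v w := rfl
        rw [g, bil_dec_left e f _ v w hvx]
        have hterm : ∀ i, bil ((F - F') A) (e i) w = 0 := by
          intro i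
          rw [bil_dec_right e f _ (e i) w hwx]
          have : ∀ j, (∑ b, f j b * w b) * bil ((F - F') A) (e i) (e j) = 0 := by
            intro j
            rw [C2 A i j]
            ring
          simp only [this, Finset.sum_const_zero]
        simp only [hterm, mul_zero, Finset.sum_const_zero]
    · intro hker
      have hK0 : phiMap d p q c e (F - F') = (fun _ _ _ => (0:ℝ)) := by
        apply tensor_ext t e c f hcomp
        intro α β γ
        rw [cpt_of_zero t e c f α β γ]
        cases α with
        | inl A => exact cpt_phi_inl t e c f hce _ A β γ
        | inr k =>
          rw [cpt_phi_inr t e c f hct hce hft hfe _ k β γ]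
          cases β with
          | inl B =>
            cases γ with
            | inl C =>
              simp only [Sum.elim_inl, vU_inl]
              have h := hker.1 B C (e k) (e_ker_tau e c hce k)
              have g1 : (∑ μ, ∑ ν, t C μ * (F - F') B μ ν * e k ν)
                  = bil ((F - F') B) (t C) (e k) := rfl
              have g2 : (∑ μ, ∑ ν, t B μ * (F - F') C μ ν * e k ν)
                  = bil ((F - F') C) (t B) (e k) := rfl
              rw [g1, g2] at h
              rw [h]
              ring
            | inr j =>
              simp only [Sum.elim_inl, Sum.elim_inr, vU_inl, vU_inr]
              have h := hker.2 B (e j) (e k) (e_ker_tau e c hce j) (e_ker_tau e c hce k)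
              have g : (∑ μ, ∑ ν, e j μ * (F - F') B μ ν * e k ν)
                  = bil ((F - F') B) (e j) (e k) := rfl
              rw [g] at h
              rw [h]
              ring
          | inr i =>
            cases γ with
            | inl C =>
              simp only [Sum.elim_inl, Sum.elim_inr, vU_inl, vU_inr]
              have h := hker.2 C (e i) (e k) (e_ker_tau e c hce i) (e_ker_tau e c hce k)
              have g : (∑ μ, ∑ ν, e i μ * (F - F') C μ ν * e k ν)
                  = bil ((F - F') C) (e i) (e k) := rfl
              rw [g] at h
              rw [h]
              ring
            | inr j =>
              simp only [Sum.elim_inr]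
              ring
      funext a b c₀
      have h := congrFun (congrFun (congrFun hK0 a) b) c₀
      rw [phi_sub e c F F' a b c₀] at h
      have : phiMap d p q c e F a b c₀ - phiMap d p q c e F' a b c₀ = 0 := h
      linarith
end
end
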